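/- arXiv:1208.1838 — 8 statements merged into one kernel-verified Lean document; each statement's English description precedes it below -/
import Mathlib

section
/- Under the stated assumptions, for every fixed g ∈ E, the linear maps v ↦ v ⊛_θ g and v ↦ g ⊛_θ v are continuous from the strong dual E′ (topology of uniform convergence on bounded subsets of E) into the space C(ℝ^d, ℂ) of continuous functions with the compact-open topology. (Proposition 1, continuity in v.) -/
/-!
A compact set of `ℝ^d` is mapped by the continuous orbit `s ↦ τ_s ǧ` onto a compact, hence
bounded, subset of `E`; uniform convergence of functionals on bounded subsets of `E` therefore
gives uniform convergence of `s ↦ v(τ_s ǧ)` on compact subsets of `ℝ^d`.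
-/

theorem ContinuousLinearMap.continuous_compContinuousMap {𝕜 E F X : Type*} [NormedField 𝕜]
    [AddCommGroup E] [Module 𝕜 E] [TopologicalSpace E] [IsTopologicalAddGroup E]
    [ContinuousSMul 𝕜 E] [AddCommGroup F] [Module 𝕜 F] [UniformSpace F] [IsUniformAddGroup F]
    [TopologicalSpace X] (f : C(X, E)) :
    Continuous fun v : E →L[𝕜] F => (v : C(E, F)).comp f := by
  rw [ContinuousMap.continuous_iff_continuous_uniformOnFun]
  have hbdd : Set.MapsTo (f '' ·) {K | IsCompact K} {S | Bornology.IsVonNBounded 𝕜 S} :=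
    fun K hK => (hK.image f.continuous).isVonNBounded 𝕜
  exact ((UniformOnFun.precomp_uniformContinuous hbdd).comp
    ContinuousLinearMap.isUniformEmbedding_toUniformOnFun.uniformContinuous).continuous

theorem twisted_convolution_continuous_in_v_general
    (d : ℕ)
    {E : Type*} [AddCommGroup E] [Module ℂ E]
    [TopologicalSpace E] [IsTopologicalAddGroup E] [ContinuousSMul ℂ E]
    -- the twisted shift operators τ_s and τ̄_s
    (τ τ' : (Fin d → ℝ) → E →L[ℂ] E)
    -- joint continuity of the actions (s, g) ↦ τ_s g and (s, g) ↦ τ̄_s g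
    (hτc : Continuous fun p : (Fin d → ℝ) × E => τ p.1 p.2)
    (hτ'c : Continuous fun p : (Fin d → ℝ) × E => τ' p.1 p.2)
    -- the continuous reflection operator g ↦ ǧ
    (R : E →L[ℂ] E)
    (g : E)
    -- `T v = v ⊛_θ g` and `T' v = g ⊛_θ v`, regarded as elements of `C(ℝ^d, ℂ)`
    (T T' : (E →L[ℂ] ℂ) → C((Fin d → ℝ), ℂ))
    (hT : ∀ (v : E →L[ℂ] ℂ) (s : Fin d → ℝ), T v s = v (τ s (R g)))
    (hT' : ∀ (v : E →L[ℂ] ℂ) (s : Fin d → ℝ), T' v s = v (τ' s (R g))) :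
    Continuous T ∧ Continuous T' := by
  have orbit_continuous {σ : (Fin d → ℝ) → E →L[ℂ] E}
      (hσ : Continuous fun p : (Fin d → ℝ) × E => σ p.1 p.2) :
      Continuous fun s => σ s (R g) :=
    hσ.comp (Continuous.prodMk_left (R g))
  have hT_eq : T = fun v : E →L[ℂ] ℂ => (v : C(E, ℂ)).comp ⟨_, orbit_continuous hτc⟩ :=
    funext fun v => ContinuousMap.ext (hT v)
  have hT'_eq : T' = fun v : E →L[ℂ] ℂ => (v : C(E, ℂ)).comp ⟨_, orbit_continuous hτ'c⟩ :=
    funext fun v => ContinuousMap.ext (hT' v)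
  rw [hT_eq, hT'_eq]
  exact ⟨ContinuousLinearMap.continuous_compContinuousMap _,
    ContinuousLinearMap.continuous_compContinuousMap _⟩

theorem twisted_convolution_continuous_in_v
    (d : ℕ) (hd : 1 ≤ d)
    {E : Type*} [AddCommGroup E] [Module ℝ E] [Module ℂ E] [IsScalarTower ℝ ℂ E]
    [TopologicalSpace E] [IsTopologicalAddGroup E] [ContinuousSMul ℂ E]
    [LocallyConvexSpace ℝ E]
    -- the bilinear skew-symmetric form θ on ℝ^d
    (θ : (Fin d → ℝ) →ₗ[ℝ] (Fin d → ℝ) →ₗ[ℝ] ℝ)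
    (hθ : ∀ s t : Fin d → ℝ, θ s t = - θ t s)
    -- E is regarded as a space of complex-valued functions on ℝ^d via ι
    (ι : E →ₗ[ℂ] ((Fin d → ℝ) → ℂ)) (hι : Function.Injective ι)
    -- the twisted shift operators τ_s and τ̄_s
    (τ τ' : (Fin d → ℝ) → E →L[ℂ] E)
    (hτ : ∀ (s : Fin d → ℝ) (g : E) (t : Fin d → ℝ),
      ι (τ s g) t = Complex.exp (Complex.I / 2 * ((θ s t : ℝ) : ℂ)) * ι g (t - s))
    (hτ' : ∀ (s : Fin d → ℝ) (g : E) (t : Fin d → ℝ),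
      ι (τ' s g) t = Complex.exp (-(Complex.I / 2) * ((θ s t : ℝ) : ℂ)) * ι g (t - s))
    -- joint continuity of the actions (s, g) ↦ τ_s g and (s, g) ↦ τ̄_s g
    (hτc : Continuous fun p : (Fin d → ℝ) × E => τ p.1 p.2)
    (hτ'c : Continuous fun p : (Fin d → ℝ) × E => τ' p.1 p.2)
    -- the continuous reflection operator g ↦ ǧ
    (R : E →L[ℂ] E) (hR : ∀ (g : E) (t : Fin d → ℝ), ι (R g) t = ι g (-t))
    (g : E)
    -- `T v = v ⊛_θ g` and `T' v = g ⊛_θ v`, regarded as elements of `C(ℝ^d, ℂ)`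
    (T T' : (E →L[ℂ] ℂ) → C((Fin d → ℝ), ℂ))
    (hT : ∀ (v : E →L[ℂ] ℂ) (s : Fin d → ℝ), T v s = v (τ s (R g)))
    (hT' : ∀ (v : E →L[ℂ] ℂ) (s : Fin d → ℝ), T' v s = v (τ' s (R g))) :
    Continuous T ∧ Continuous T' :=
  twisted_convolution_continuous_in_v_general d τ τ' hτc hτ'c R g T T' hT hT'
end

section
/- Let A : E → C(ℝ^d, ℂ) be a continuous linear map that commutes with all twisted shifts, i.e. (A(τ_s g))(t) = exp((i/2)θ(s,t))·(A g)(t−s) for all s, t ∈ ℝ^d and g ∈ E. Then there exists a unique continuous linear functional v ∈ E′ such that A g = v ⊛_θ g, i.e. (A g)(s) = v(τ_s ǧ), for all g ∈ E and s ∈ ℝ^d; the functional is given by v(g) = (A ǧ)(0). (Proposition 2.) -/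
/-!
The functional is forced by evaluating at the origin: `v (τ₀ ǧ) = v ǧ` must equal `(A g)(0)`,
so `v g = (A ǧ)(0)`. Conversely this `v` works because conjugating a twisted shift by the
reflection gives the opposite twisted shift, `(τ_s ǧ)ˇ = τ_{-s} g`, and `A` intertwines
`τ_{-s}` with the twisted shift of continuous functions, whose value at `0` is `(A g)(s)`.
-/

section TwistedShift

variable {V E : Type*} [AddCommMonoid E] [Module ℂ E] [TopologicalSpace E]

theorem reflection_reflection [InvolutiveNeg V] {ι : E →ₗ[ℂ] (V → ℂ)} (hι : Function.Injective ι)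
    {R : E →L[ℂ] E} (hR : ∀ (g : E) (t : V), ι (R g) t = ι g (-t)) (g : E) :
    R (R g) = g :=
  hι <| funext fun t => by rw [hR, hR, neg_neg]

variable [AddCommGroup V] [Module ℝ V]

theorem twistedShift_zero (θ : V →ₗ[ℝ] V →ₗ[ℝ] ℝ)
    {ι : E →ₗ[ℂ] (V → ℂ)} (hι : Function.Injective ι) {τ : V → E →L[ℂ] E}
    (hτ : ∀ (s : V) (g : E) (t : V),
      ι (τ s g) t = Complex.exp (Complex.I / 2 * ((θ s t : ℝ) : ℂ)) * ι g (t - s))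
    (g : E) : τ 0 g = g :=
  hι <| funext fun t => by simp [hτ]

theorem reflection_twistedShift_reflection (θ : V →ₗ[ℝ] V →ₗ[ℝ] ℝ)
    {ι : E →ₗ[ℂ] (V → ℂ)} (hι : Function.Injective ι) {τ : V → E →L[ℂ] E}
    (hτ : ∀ (s : V) (g : E) (t : V),
      ι (τ s g) t = Complex.exp (Complex.I / 2 * ((θ s t : ℝ) : ℂ)) * ι g (t - s))
    {R : E →L[ℂ] E} (hR : ∀ (g : E) (t : V), ι (R g) t = ι g (-t)) (s : V) (g : E) :
    R (τ s (R g)) = τ (-s) g :=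
  hι <| funext fun t => by
    rw [hR, hτ, hR, hτ, map_neg, LinearMap.map_neg₂, neg_sub', neg_neg, sub_neg_eq_add]

end TwistedShift

theorem exists_unique_functional_of_commuting_map_general
    (d : ℕ)
    {E : Type*} [AddCommGroup E] [Module ℂ E]
    [TopologicalSpace E]
    -- the bilinear skew-symmetric form θ on ℝ^d
    (θ : (Fin d → ℝ) →ₗ[ℝ] (Fin d → ℝ) →ₗ[ℝ] ℝ)
    -- E is regarded as a space of complex-valued functions on ℝ^d via ι
    (ι : E →ₗ[ℂ] ((Fin d → ℝ) → ℂ)) (hι : Function.Injective ι)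
    -- the twisted shift operators τ_s and τ̄_s
    (τ : (Fin d → ℝ) → E →L[ℂ] E)
    (hτ : ∀ (s : Fin d → ℝ) (g : E) (t : Fin d → ℝ),
      ι (τ s g) t = Complex.exp (Complex.I / 2 * ((θ s t : ℝ) : ℂ)) * ι g (t - s))
    (R : E →L[ℂ] E) (hR : ∀ (g : E) (t : Fin d → ℝ), ι (R g) t = ι g (-t))
    (A : E →ₗ[ℂ] C((Fin d → ℝ), ℂ)) (hA : Continuous A)
    (hAτ : ∀ (s : Fin d → ℝ) (g : E) (t : Fin d → ℝ),
      A (τ s g) t = Complex.exp (Complex.I / 2 * ((θ s t : ℝ) : ℂ)) * A g (t - s)) :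
    ∃ v : E →L[ℂ] ℂ,
      (∀ (g : E) (s : Fin d → ℝ), A g s = v (τ s (R g))) ∧
      (∀ g : E, v g = A (R g) 0) ∧
      ∀ w : E →L[ℂ] ℂ, (∀ (g : E) (s : Fin d → ℝ), A g s = w (τ s (R g))) → w = v := by
  let Acl : E →L[ℂ] C(Fin d → ℝ, ℂ) := ⟨A, hA⟩
  refine ⟨(ContinuousMap.evalCLM ℂ 0).comp (Acl.comp R), fun g s => ?_, fun g => rfl,
    fun w hw => ?_⟩
  · change A g s = A (R (τ s (R g))) 0
    simp [reflection_twistedShift_reflection θ hι hτ hR, hAτ]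
  · ext g
    calc w g = w (τ 0 (R (R g))) := by
          rw [twistedShift_zero θ hι hτ, reflection_reflection hι hR]
      _ = A (R g) 0 := (hw (R g) 0).symm

theorem exists_unique_functional_of_commuting_map
    (d : ℕ) (hd : 1 ≤ d)
    {E : Type*} [AddCommGroup E] [Module ℝ E] [Module ℂ E] [IsScalarTower ℝ ℂ E]
    [TopologicalSpace E] [IsTopologicalAddGroup E] [ContinuousSMul ℂ E]
    [LocallyConvexSpace ℝ E]
    -- the bilinear skew-symmetric form θ on ℝ^d
    (θ : (Fin d → ℝ) →ₗ[ℝ] (Fin d → ℝ) →ₗ[ℝ] ℝ)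
    (hθ : ∀ s t : Fin d → ℝ, θ s t = - θ t s)
    -- E is regarded as a space of complex-valued functions on ℝ^d via ι
    (ι : E →ₗ[ℂ] ((Fin d → ℝ) → ℂ)) (hι : Function.Injective ι)
    -- the twisted shift operators τ_s and τ̄_s
    (τ τ' : (Fin d → ℝ) → E →L[ℂ] E)
    (hτ : ∀ (s : Fin d → ℝ) (g : E) (t : Fin d → ℝ),
      ι (τ s g) t = Complex.exp (Complex.I / 2 * ((θ s t : ℝ) : ℂ)) * ι g (t - s))
    (R : E →L[ℂ] E) (hR : ∀ (g : E) (t : Fin d → ℝ), ι (R g) t = ι g (-t))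
    (A : E →ₗ[ℂ] C((Fin d → ℝ), ℂ)) (hA : Continuous A)
    (hAτ : ∀ (s : Fin d → ℝ) (g : E) (t : Fin d → ℝ),
      A (τ s g) t = Complex.exp (Complex.I / 2 * ((θ s t : ℝ) : ℂ)) * A g (t - s)) :
    ∃ v : E →L[ℂ] ℂ,
      (∀ (g : E) (s : Fin d → ℝ), A g s = v (τ s (R g))) ∧
      (∀ g : E, v g = A (R g) 0) ∧
      ∀ w : E →L[ℂ] ℂ, (∀ (g : E) (s : Fin d → ℝ), A g s = w (τ s (R g))) → w = v :=
  exists_unique_functional_of_commuting_map_general d θ ι hι τ hτ R hR A hA hAτ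
end

section
/- Let G be a locally compact topological group and let E be a barrelled locally convex topological ℂ-vector space in which every bounded subset is relatively compact (a Montel space), endowed with an injective ℂ-linear map ι : E → (X → ℂ) into the functions on a set X such that each evaluation map f ↦ ι(f)(x) is continuous on E (the topology of E is stronger than pointwise convergence). Let T : G → (E →L E) be a linear representation (T(e) = id and T(ab) = T(a) ∘ T(b), each T(a) a continuous linear operator). Assume: (1) for every f ∈ E there is a compact neighborhood K of the identity e in G such that the set { T(a) f : a ∈ K } is bounded in E; (2) for every f ∈ E and x ∈ X, ι(T(a) f)(x) → ι(f)(x) as a → e. Then the representation is continuous, i.e. the map G × E → E, (a, f) ↦ T(a) f, is jointly continuous. (Appendix, Lemma 1.) -/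
/-!
The Montel property puts the orbit `T a f` of `a` near `1` inside the compact set
`closure (T '' K) f`; there the topology of `E` coincides with the weaker pointwise topology
induced by the continuous injection `ι`, so hypothesis (2) gives continuity of `a ↦ T a f` at `1`,
hence everywhere. Orbits over a compact neighbourhood `Q` are then compact, hence bounded, and
Banach–Steinhaus on the barrelled space `E` makes `{T a | a ∈ Q}` equicontinuous, which upgrades
separate continuity to joint continuity.
-/

open Filter Topology Set Uniformity

theorem tendsto_of_tendsto_comp_of_eventually_mem_isCompact {α X Y : Type*} [TopologicalSpace X]
    [TopologicalSpace Y] [T2Space Y] {φ : X → Y} (hφ : Continuous φ) (hφi : Function.Injective φ)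
    {C : Set X} (hC : IsCompact C) {l : Filter α} {u : α → X} {x : X}
    (hmem : ∀ᶠ a in l, u a ∈ C) (hlim : Tendsto (φ ∘ u) l (𝓝 (φ x))) :
    Tendsto u l (𝓝 x) :=
  hC.tendsto_nhds_of_unique_mapClusterPt hmem fun _ _ hy =>
    hφi <| eq_of_nhds_neBot <| (hy.continuousAt_comp hφ.continuousAt).clusterPt.mono hlim

theorem MonoidHom.continuous_apply_of_tendsto_one {G R E : Type*} [Group G] [TopologicalSpace G]
    [ContinuousMul G] [Semiring R] [AddCommMonoid E] [Module R E] [TopologicalSpace E]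
    (T : G →* (E →L[R] E)) {f : E} (hf : Tendsto (fun a => T a f) (𝓝 1) (𝓝 f)) :
    Continuous fun a => T a f := by
  refine continuous_iff_continuousAt.2 fun a₀ => ?_
  have hshift : Tendsto (a₀⁻¹ * ·) (𝓝 a₀) (𝓝 1) := by
    simpa using (continuous_const_mul a₀⁻¹).tendsto a₀
  have hT : ∀ a, T a₀ (T (a₀⁻¹ * a) f) = T a f := fun a => by
    rw [← mul_apply_eq_comp, ← map_mul, mul_inv_cancel_left]
  simpa only [ContinuousAt, Function.comp_def, hT] using
    ((T a₀).continuous.tendsto f).comp (hf.comp hshift)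

theorem tendsto_apply_prod_nhds_zero_of_isVonNBounded {α E F : Type*}
    [AddCommGroup E] [Module ℝ E] [TopologicalSpace E] [IsTopologicalAddGroup E]
    [ContinuousSMul ℝ E] [BarrelledSpace ℝ E]
    [AddCommGroup F] [Module ℝ F] [TopologicalSpace F] [IsTopologicalAddGroup F]
    [ContinuousSMul ℝ F] [LocallyConvexSpace ℝ F]
    (T : α → E →L[ℝ] F) {s : Set α}
    (hs : ∀ f, Bornology.IsVonNBounded ℝ ((fun a => T a f) '' s)) :
    Tendsto (fun p : α × E => T p.1 p.2) (𝓟 s ×ˢ 𝓝 0) (𝓝 0) := by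
  let := IsTopologicalAddGroup.rightUniformSpace E
  let := IsTopologicalAddGroup.rightUniformSpace F
  have := isUniformAddGroup_of_addCommGroup (G := E)
  have := isUniformAddGroup_of_addCommGroup (G := F)
  have hequi := (PolynormableSpace.banach_steinhaus (𝓕 := fun a : s => T a) fun f =>
    (hs f).subset (range_subset_iff.2 fun a => mem_image_of_mem _ a.2)).equicontinuous 0
  intro U hU
  have hU' : {p : F × F | p.2 - p.1 ∈ U} ∈ 𝓤 F := by
    rw [uniformity_eq_comap_nhds_zero]
    exact preimage_mem_comap hU
  refine mem_prod_iff.2 ⟨s, mem_principal_self s, _, hequi _ hU', ?_⟩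
  rintro ⟨a, g⟩ ⟨ha, hg⟩
  simpa using hg ⟨a, ha⟩

theorem continuous_uncurry_of_continuous_apply_of_barrelled {G E F : Type*} [TopologicalSpace G]
    [WeaklyLocallyCompactSpace G]
    [AddCommGroup E] [Module ℝ E] [TopologicalSpace E] [IsTopologicalAddGroup E]
    [ContinuousSMul ℝ E] [BarrelledSpace ℝ E]
    [AddCommGroup F] [Module ℝ F] [TopologicalSpace F] [IsTopologicalAddGroup F]
    [ContinuousSMul ℝ F] [LocallyConvexSpace ℝ F]
    (T : G → E →L[ℝ] F) (hT : ∀ f, Continuous fun a => T a f) :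
    Continuous fun p : G × E => T p.1 p.2 := by
  refine continuous_iff_continuousAt.2 fun ⟨a₀, f₀⟩ => ?_
  obtain ⟨Q, hQ, hQa₀⟩ := exists_compact_mem_nhds a₀
  have hequi := tendsto_apply_prod_nhds_zero_of_isVonNBounded T (s := Q) fun f =>
    (hQ.image (hT f)).isVonNBounded ℝ
  have hshift : Tendsto (Prod.map id (· - f₀)) (𝓝 (a₀, f₀)) (𝓟 Q ×ˢ 𝓝 0) := by
    rw [nhds_prod_eq]
    exact (tendsto_id'.2 (le_principal_iff.2 hQa₀)).prodMap
      (tendsto_sub_nhds_zero_iff.2 tendsto_id)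
  have hmoving : Tendsto (fun p : G × E => T p.1 (p.2 - f₀)) (𝓝 (a₀, f₀)) (𝓝 0) :=
    hequi.comp hshift
  have hfixed : Tendsto (fun p : G × E => T p.1 f₀) (𝓝 (a₀, f₀)) (𝓝 (T a₀ f₀)) :=
    ((hT f₀).comp continuous_fst).tendsto _
  simpa [ContinuousAt] using hmoving.add hfixed

theorem montel_representation_continuous
    {G : Type*} [Group G] [TopologicalSpace G] [IsTopologicalGroup G]
    [LocallyCompactSpace G]
    {E : Type*} [AddCommGroup E] [Module ℝ E] [Module ℂ E] [IsScalarTower ℝ ℂ E]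
    [TopologicalSpace E] [IsTopologicalAddGroup E] [ContinuousSMul ℂ E]
    [LocallyConvexSpace ℝ E] [BarrelledSpace ℝ E]
    -- every bounded subset of E is relatively compact (Montel property)
    (hMontel : ∀ S : Set E, Bornology.IsVonNBounded ℂ S → IsCompact (closure S))
    -- E is a space of functions on X, with topology stronger than pointwise convergence
    {X : Type*} (ι : E →ₗ[ℂ] (X → ℂ)) (hι : Function.Injective ι)
    (hev : ∀ x : X, Continuous fun f : E => ι f x)
    -- a linear representation of G by continuous linear operators on E
    (T : G →* (E →L[ℂ] E))
    -- (1): boundedness of the orbit of each f over a compact neighborhood of 1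
    (h1 : ∀ f : E, ∃ K : Set G, K ∈ nhds (1 : G) ∧ IsCompact K ∧
      Bornology.IsVonNBounded ℂ ((fun a => T a f) '' K))
    -- (2): pointwise convergence T a f → f as a → 1
    (h2 : ∀ (f : E) (x : X),
      Filter.Tendsto (fun a : G => ι (T a f) x) (nhds 1) (nhds (ι f x))) :
    Continuous fun p : G × E => T p.1 p.2 := by
  have horbit : ∀ f, Tendsto (fun a => T a f) (𝓝 1) (𝓝 f) := fun f => by
    obtain ⟨K, hK, -, hKb⟩ := h1 f
    exact tendsto_of_tendsto_comp_of_eventually_mem_isCompact (continuous_pi hev) hι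
      (hMontel _ hKb) (mem_of_superset hK fun a ha => subset_closure (mem_image_of_mem _ ha))
      (tendsto_pi_nhds.2 (h2 f))
  have : ContinuousSMul ℝ E := IsScalarTower.continuousSMul ℂ
  exact continuous_uncurry_of_continuous_apply_of_barrelled (fun a => (T a).restrictScalars ℝ)
    fun f => T.continuous_apply_of_tendsto_one (horbit f)
end

section
/- For all Schwartz functions f₁, f₂ ∈ 𝒮(ℝ^d) and every s ∈ ℝ^d, the iterated integral ∫_{ℝ^d} (𝓕f₁)(t) ( ∫_{ℝ^d} f₂(x + (1/2)ϑt) e^{i(t−s)·x} dx ) dt equals ((𝓕f₁) ⊛_ϑ (𝓕f₂))(s). Equivalently, the Fourier transform of the Moyal product (f₁ ⋆_ϑ f₂)(x) := (2π)^{−d} ∫ (𝓕f₁)(t) f₂(x + (1/2)ϑt) e^{i t·x} dt is (2π)^{−d} (𝓕f₁) ⊛_ϑ (𝓕f₂): the Fourier transform intertwines the Moyal star product with the twisted convolution (relation (4.9) via formula (5.1)). -/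
/-!
STATEMENT 7 (relation (4.9) via formula (5.1)).
For Schwartz functions `f₁, f₂` and every `s`, the iterated integral
`∫ t, (𝓕f₁)(t) (∫ x, f₂(x + (1/2)ϑt) e^{i(t−s)·x} dx) dt` equals
`((𝓕f₁) ⊛_ϑ (𝓕f₂))(s)`; equivalently, the Fourier transform of the Moyal
product `f₁ ⋆_ϑ f₂` is `(2π)^{−d} (𝓕f₁) ⊛_ϑ (𝓕f₂)`.
-/

open MeasureTheory Matrix

/-- The Fourier transform `(𝓕f)(s) = ∫ f(x) e^{−i x·s} dx`. -/
noncomputable def fourierT (d : ℕ) (f : (Fin d → ℝ) → ℂ) (s : Fin d → ℝ) : ℂ :=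
  ∫ x : Fin d → ℝ, f x * Complex.exp (-Complex.I * ((x ⬝ᵥ s : ℝ) : ℂ))

/-- The twisted convolution
`(g₁ ⊛_ϑ g₂)(s) = ∫ g₁(t) g₂(s−t) e^{(i/2) s·(ϑt)} dt`. -/
noncomputable def twConv (d : ℕ) (ϑ : Matrix (Fin d) (Fin d) ℝ)
    (g₁ g₂ : (Fin d → ℝ) → ℂ) (s : Fin d → ℝ) : ℂ :=
  ∫ t : Fin d → ℝ, g₁ t * g₂ (s - t) *
    Complex.exp (Complex.I / 2 * ((s ⬝ᵥ ϑ.mulVec t : ℝ) : ℂ))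

/-- The Moyal star product
`(f₁ ⋆_ϑ f₂)(x) = (2π)^{−d} ∫ (𝓕f₁)(t) f₂(x + (1/2)ϑt) e^{i t·x} dt`. -/
noncomputable def moyal (d : ℕ) (ϑ : Matrix (Fin d) (Fin d) ℝ)
    (f₁ f₂ : (Fin d → ℝ) → ℂ) (x : Fin d → ℝ) : ℂ :=
  (((2 * Real.pi) ^ d : ℝ) : ℂ)⁻¹ *
    ∫ t : Fin d → ℝ, fourierT d f₁ t * f₂ (x + (1 / 2 : ℝ) • ϑ.mulVec t) *
      Complex.exp (Complex.I * ((t ⬝ᵥ x : ℝ) : ℂ))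

/-! Translating `x ↦ x + ½ϑt` turns the inner `x`-integral into `(𝓕f₂)(s − t)` times the phase
`e^{-(i/2)(t − s)·ϑt}`, which is `e^{(i/2) s·ϑt}` because `t·ϑt = 0` for antisymmetric `ϑ`.
For the Moyal product, Fubini exchanges the `x`- and `t`-integrals. It applies because the
measure-preserving shear `(t, x) ↦ (t, x + ½ϑt)` reduces integrability to that of
`𝓕f₁ ⊗ f₂`, and `𝓕f₁` is integrable, being a rescaled Schwartz Fourier transform on
Euclidean space. -/

open Complex FourierTransform

theorem dotProduct_mulVec_self_eq_zero_of_transpose_eq_neg {n R : Type*} [Fintype n]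
    [CommRing R] [NoZeroDivisors R] [CharZero R] {A : Matrix n n R} (hA : Aᵀ = -A) (v : n → R) :
    v ⬝ᵥ A *ᵥ v = 0 := by
  refine CharZero.eq_neg_self_iff.mp ?_
  calc v ⬝ᵥ A *ᵥ v = v ᵥ* A ⬝ᵥ v := dotProduct_mulVec v A v
    _ = -(v ⬝ᵥ A *ᵥ v) := by
      rw [← mulVec_transpose, hA, neg_mulVec, neg_dotProduct, dotProduct_comm]

theorem MeasureTheory.Integrable.prod_mul_comp_add {α E 𝕜 : Type*} [MeasurableSpace α]
    [MeasurableSpace E] [AddGroup E] [MeasurableAdd₂ E] [NormedRing 𝕜] {μ : Measure α}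
    {ν : Measure E} [SFinite μ] [SFinite ν] [ν.IsAddRightInvariant]
    {F : α → 𝕜} {g : E → 𝕜} {c : α → E}
    (hF : Integrable F μ) (hg : Integrable g ν) (hc : Measurable c) :
    Integrable (fun p : α × E => F p.1 * g (p.2 + c p.1)) (μ.prod ν) := by
  have shear : MeasurePreserving (fun p : α × E => (p.1, p.2 + c p.1)) (μ.prod ν) (μ.prod ν) :=
    (MeasurePreserving.id μ).skew_product (measurable_snd.add (hc.comp measurable_fst))
      (ae_of_all _ fun a => map_add_right_eq_self ν (c a))
  exact shear.integrable_comp_of_integrable (hF.mul_prod hg)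

section

variable {d : ℕ}

theorem integral_comp_add_mul_exp_dotProduct (f : (Fin d → ℝ) → ℂ) (u c : Fin d → ℝ) :
    ∫ x, f (x + c) * exp (I * ↑(u ⬝ᵥ x)) = fourierT d f (-u) * exp (-I * ↑(u ⬝ᵥ c)) := by
  have shift := integral_add_right_eq_self (μ := volume)
    (fun y => f y * exp (I * ↑(u ⬝ᵥ (y - c)))) c
  simp only [add_sub_cancel_right] at shift
  rw [shift, fourierT, ← integral_mul_const]
  congr 1 with y
  rw [dotProduct_sub, dotProduct_neg, dotProduct_comm y u, mul_assoc, ← exp_add]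
  push_cast
  ring_nf

theorem fourierT_eq_fourier_comp_ofLp (f : (Fin d → ℝ) → ℂ) (s : Fin d → ℝ) :
    fourierT d f s =
      𝓕 (fun v : EuclideanSpace ℝ (Fin d) => f (WithLp.ofLp v))
        ((2 * Real.pi)⁻¹ • WithLp.toLp 2 s) := by
  rw [Real.fourier_eq', fourierT, ← (PiLp.volume_preserving_ofLp (Fin d)).integral_comp
    (MeasurableEquiv.toLp 2 (Fin d → ℝ)).symm.measurableEmbedding]
  congr 1 with v
  have hinner : inner ℝ v (WithLp.toLp 2 s) = v.ofLp ⬝ᵥ s := by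
    simp [PiLp.inner_apply, dotProduct, mul_comm]
  rw [real_inner_smul_right, hinner, smul_eq_mul, mul_comm]
  congr 2
  push_cast
  field_simp

theorem SchwartzMap.integrable_fourierT (f : SchwartzMap (Fin d → ℝ) ℂ) :
    Integrable (fourierT d f) := by
  let g : SchwartzMap (EuclideanSpace ℝ (Fin d)) ℂ :=
    compCLMOfContinuousLinearEquiv ℝ (EuclideanSpace.equiv (Fin d) ℝ) f
  have hg : Integrable fun v => 𝓕 g ((2 * Real.pi)⁻¹ • v) :=
    (𝓕 g).integrable.comp_smul (by positivity)
  refine ((PiLp.volume_preserving_toLp (Fin d)).integrable_comp_of_integrable hg).congr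
    (ae_of_all _ fun s => ?_)
  exact (fourierT_eq_fourier_comp_ofLp f s).symm

theorem integral_fourierT_mul_integral_eq_twConv (f₁ f₂ : (Fin d → ℝ) → ℂ)
    {ϑ : Matrix (Fin d) (Fin d) ℝ} (hϑ : ϑᵀ = -ϑ) (s : Fin d → ℝ) :
    (∫ t, fourierT d f₁ t *
        ∫ x, f₂ (x + (1 / 2 : ℝ) • ϑ *ᵥ t) * exp (I * ↑((t - s) ⬝ᵥ x))) =
      twConv d ϑ (fourierT d f₁) (fourierT d f₂) s := by
  rw [twConv]
  congr 1 with t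
  have phase : (t - s) ⬝ᵥ (1 / 2 : ℝ) • ϑ *ᵥ t = -(1 / 2) * (s ⬝ᵥ ϑ *ᵥ t) := by
    rw [dotProduct_smul, sub_dotProduct, dotProduct_mulVec_self_eq_zero_of_transpose_eq_neg hϑ,
      smul_eq_mul]
    ring
  rw [integral_comp_add_mul_exp_dotProduct, neg_sub, phase, mul_assoc]
  push_cast
  ring_nf

theorem fourierT_moyal (ϑ : Matrix (Fin d) (Fin d) ℝ) {f₁ f₂ : (Fin d → ℝ) → ℂ}
    (hf₁ : Integrable (fourierT d f₁)) (hf₂ : Integrable f₂) (s : Fin d → ℝ) :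
    fourierT d (moyal d ϑ f₁ f₂) s = (((2 * Real.pi) ^ d : ℝ) : ℂ)⁻¹ *
      ∫ t, fourierT d f₁ t *
        ∫ x, f₂ (x + (1 / 2 : ℝ) • ϑ *ᵥ t) * exp (I * ↑((t - s) ⬝ᵥ x)) := by
  set G : (Fin d → ℝ) → (Fin d → ℝ) → ℂ := fun t x =>
    fourierT d f₁ t * f₂ (x + (1 / 2 : ℝ) • ϑ *ᵥ t) * exp (I * ↑((t - s) ⬝ᵥ x))
  have hc : Measurable fun t : Fin d → ℝ => (1 / 2 : ℝ) • ϑ *ᵥ t := by fun_prop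
  have hphase : Continuous fun p : (Fin d → ℝ) × (Fin d → ℝ) =>
      exp (I * ↑((p.1 - s) ⬝ᵥ p.2)) := by
    fun_prop
  have hG : Integrable (Function.uncurry G) (volume.prod volume) :=
    (hf₁.prod_mul_comp_add hf₂ hc).mul_bdd hphase.aestronglyMeasurable
      (ae_of_all _ fun p => (norm_exp_I_mul_ofReal _).le)
  calc fourierT d (moyal d ϑ f₁ f₂) s
      = (((2 * Real.pi) ^ d : ℝ) : ℂ)⁻¹ * ∫ x, ∫ t, G t x := by
        rw [fourierT, ← integral_const_mul]
        congr 1 with x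
        rw [moyal, mul_assoc, ← integral_mul_const]
        congr 2 with t
        rw [mul_assoc, ← exp_add]
        simp only [G, sub_dotProduct, dotProduct_comm x s]
        push_cast
        ring_nf
    _ = (((2 * Real.pi) ^ d : ℝ) : ℂ)⁻¹ * ∫ t, ∫ x, G t x := by
        rw [integral_integral_swap hG]
    _ = (((2 * Real.pi) ^ d : ℝ) : ℂ)⁻¹ * ∫ t, fourierT d f₁ t *
          ∫ x, f₂ (x + (1 / 2 : ℝ) • ϑ *ᵥ t) * exp (I * ↑((t - s) ⬝ᵥ x)) := by
        simp only [G, mul_assoc, integral_const_mul]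

end

theorem fourier_intertwines_moyal_and_twisted_convolution_general
    (d : ℕ) (ϑ : Matrix (Fin d) (Fin d) ℝ) (hϑ : ϑᵀ = -ϑ)
    (f₁ f₂ : SchwartzMap (Fin d → ℝ) ℂ) (s : Fin d → ℝ) :
    (∫ t : Fin d → ℝ, fourierT d (⇑f₁) t *
        ∫ x : Fin d → ℝ, f₂ (x + (1 / 2 : ℝ) • ϑ.mulVec t) *
          Complex.exp (Complex.I * (((t - s) ⬝ᵥ x : ℝ) : ℂ))) =
      twConv d ϑ (fourierT d ⇑f₁) (fourierT d ⇑f₂) s ∧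
    fourierT d (moyal d ϑ ⇑f₁ ⇑f₂) s =
      (((2 * Real.pi) ^ d : ℝ) : ℂ)⁻¹ *
        twConv d ϑ (fourierT d ⇑f₁) (fourierT d ⇑f₂) s := by
  have hconv := integral_fourierT_mul_integral_eq_twConv f₁ f₂ hϑ s
  exact ⟨hconv, by rw [fourierT_moyal ϑ f₁.integrable_fourierT f₂.integrable, hconv]⟩

theorem fourier_intertwines_moyal_and_twisted_convolution
    (d : ℕ) (hd : 1 ≤ d) (ϑ : Matrix (Fin d) (Fin d) ℝ) (hϑ : ϑᵀ = -ϑ)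
    (f₁ f₂ : SchwartzMap (Fin d → ℝ) ℂ) (s : Fin d → ℝ) :
    (∫ t : Fin d → ℝ, fourierT d (⇑f₁) t *
        ∫ x : Fin d → ℝ, f₂ (x + (1 / 2 : ℝ) • ϑ.mulVec t) *
          Complex.exp (Complex.I * (((t - s) ⬝ᵥ x : ℝ) : ℂ))) =
      twConv d ϑ (fourierT d ⇑f₁) (fourierT d ⇑f₂) s ∧
    fourierT d (moyal d ϑ ⇑f₁ ⇑f₂) s =
      (((2 * Real.pi) ^ d : ℝ) : ℂ)⁻¹ *
        twConv d ϑ (fourierT d ⇑f₁) (fourierT d ⇑f₂) s :=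
  fourier_intertwines_moyal_and_twisted_convolution_general d ϑ hϑ f₁ f₂ s
end

section
/- Let ϑ be an invertible real antisymmetric d×d matrix (so d is even and det ϑ > 0). For all f₁, f₂ ∈ 𝒮(ℝ^d) and all x ∈ ℝ^d, (f₁ ⋆_ϑ f₂)(x) = (π^d det ϑ)^{−1} ∫_{ℝ^d} f₁(t) (𝓕̄_ϑ f₂)(x−t) e^{−2i x·(ϑ^{−1}t)} dt, where (𝓕̄_ϑ f)(ξ) := ∫_{ℝ^d} f(x) e^{−2i x·(ϑ^{−1}ξ)} dx is the conjugate symplectic Fourier transform. Equivalently, f₁ ⋆_ϑ f₂ = (π^d det ϑ)^{−1} f₁ ⊛_{ϑ'} (𝓕̄_ϑ f₂) with ϑ' := −4ϑ^{−1} (second identity of (5.2)). -/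
/-!
STATEMENT 9 (second identity of (5.2)).
For an invertible real antisymmetric matrix `ϑ`,
`(f₁ ⋆_ϑ f₂)(x) = (π^d det ϑ)^{−1} ∫ f₁(t) (𝓕̄_ϑ f₂)(x−t) e^{−2i x·(ϑ⁻¹t)} dt`,
where `(𝓕̄_ϑ f)(ξ) = ∫ f(x) e^{−2i x·(ϑ⁻¹ξ)} dx` is the conjugate symplectic
Fourier transform; equivalently
`f₁ ⋆_ϑ f₂ = (π^d det ϑ)^{−1} f₁ ⊛_{−4ϑ⁻¹} (𝓕̄_ϑ f₂)`.
-/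

open MeasureTheory Matrix

/-- The conjugate symplectic Fourier transform
`(𝓕̄_ϑ f)(ξ) = ∫ f(x) e^{−2i x·(ϑ⁻¹ξ)} dx`. -/
noncomputable def symplFTBar (d : ℕ) (ϑ : Matrix (Fin d) (Fin d) ℝ)
    (f : (Fin d → ℝ) → ℂ) (ξ : Fin d → ℝ) : ℂ :=
  ∫ x : Fin d → ℝ, f x * Complex.exp (-2 * Complex.I * ((x ⬝ᵥ ϑ⁻¹.mulVec ξ : ℝ) : ℂ))

/-
Expanding `𝓕 f₁` in the definition of `f₁ ⋆_ϑ f₂` and swapping the two integrals (the integrand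
is dominated by `|f₁ y| |f₂ (x + ϑt/2)|`) leaves, for each `y`, the integral of
`f₂ (x + ϑt/2) e^{i t·(x-y)}` over `t`. Substituting `u = x + ϑt/2` and using antisymmetry,
`t·(x-y) = -2 (u-x)·ϑ⁻¹(x-y)`, so this inner integral is `2^d / |det ϑ|` times
`(𝓕̄_ϑ f₂)(x-y) e^{-2i x·ϑ⁻¹y}`. Finally `det ϑ > 0` for invertible antisymmetric `ϑ`, so the
constants combine to `(π^d det ϑ)⁻¹`.
-/

namespace Matrix

variable {n : Type*} [Fintype n]

theorem dotProduct_mulVec_eq_neg_of_transpose_eq_neg {R : Type*} [CommRing R]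
    {A : Matrix n n R} (hA : Aᵀ = -A) (u v : n → R) : u ⬝ᵥ A *ᵥ v = -(v ⬝ᵥ A *ᵥ u) := by
  rw [dotProduct_mulVec, ← mulVec_transpose, hA, neg_mulVec, neg_dotProduct, dotProduct_comm]

theorem dotProduct_mulVec_self_of_transpose_eq_neg {R : Type*} [CommRing R] [NoZeroDivisors R]
    [CharZero R] {A : Matrix n n R} (hA : Aᵀ = -A) (v : n → R) : v ⬝ᵥ A *ᵥ v = 0 :=
  self_eq_neg.mp (dotProduct_mulVec_eq_neg_of_transpose_eq_neg hA v v)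

variable [DecidableEq n]

theorem dotProduct_inv_mulVec_self_of_transpose_eq_neg {A : Matrix n n ℝ} (hA : Aᵀ = -A)
    (hdet : IsUnit A.det) (v : n → ℝ) : v ⬝ᵥ A⁻¹ *ᵥ v = 0 := by
  have hv : v = A *ᵥ (A⁻¹ *ᵥ v) := by rw [mulVec_mulVec, mul_nonsing_inv _ hdet, one_mulVec]
  nth_rewrite 1 [hv]
  rw [dotProduct_comm, dotProduct_mulVec_self_of_transpose_eq_neg hA]

/-- The path `s ↦ (1 - s) • A + s • 1` from `A` to `1` avoids singular matrices, because
`v ⬝ᵥ ((1 - s) • A + s • 1) *ᵥ v = s * (v ⬝ᵥ v)`. -/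
theorem det_pos_of_transpose_eq_neg {A : Matrix n n ℝ} (hA : Aᵀ = -A) (hdet : A.det ≠ 0) :
    0 < A.det := by
  set B : ℝ → Matrix n n ℝ := fun s => (1 - s) • A + s • 1
  have hB_ne : ∀ s ∈ Set.Icc (0 : ℝ) 1, (B s).det ≠ 0 := by
    intro s hs hBs
    obtain ⟨v, hv, hBv⟩ := exists_mulVec_eq_zero_iff.mpr hBs
    rcases hs.1.eq_or_lt with rfl | hs₀
    · simp only [B, sub_zero, one_smul, zero_smul, add_zero] at hBs
      exact hdet hBs
    · have hquad : v ⬝ᵥ B s *ᵥ v = s * (v ⬝ᵥ v) := by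
        simp [B, add_mulVec, smul_mulVec, dotProduct_add, dotProduct_smul,
          dotProduct_mulVec_self_of_transpose_eq_neg hA]
      rw [hBv, dotProduct_zero, eq_comm, mul_eq_zero] at hquad
      exact hquad.elim hs₀.ne' (hv ∘ dotProduct_self_eq_zero.mp)
  by_contra hle
  have hcont : Continuous fun s => (B s).det := by fun_prop
  obtain ⟨s, hs, hs0⟩ := intermediate_value_Icc zero_le_one hcont.continuousOn
    ⟨by simpa [B] using not_lt.mp hle, by simp [B]⟩
  exact hB_ne s hs hs0

end Matrix

section ChangeOfVariables

variable {E F : Type*} [NormedAddCommGroup E] [NormedSpace ℝ E] [MeasurableSpace E]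
  [BorelSpace E] [FiniteDimensional ℝ E] [NormedAddCommGroup F]
  (μ : Measure E) [μ.IsAddHaarMeasure] {f : E →ₗ[ℝ] E}

theorem integral_comp_add_linearMap [NormedSpace ℝ F] (hf : LinearMap.det f ≠ 0) (c : E)
    (g : E → F) : ∫ x, g (c + f x) ∂μ = |(LinearMap.det f)⁻¹| • ∫ y, g y ∂μ := by
  have he : MeasurableEmbedding f :=
    (f.equivOfDetNeZero hf).toContinuousLinearEquiv.toHomeomorph.toMeasurableEquiv
      |>.measurableEmbedding
  rw [← he.integral_map (g := fun y => g (c + y)),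
    Measure.map_linearMap_addHaar_eq_smul_addHaar μ hf, integral_smul_measure,
    ENNReal.toReal_ofReal (abs_nonneg _), integral_add_left_eq_self]

theorem MeasureTheory.Integrable.comp_add_linearMap (hf : LinearMap.det f ≠ 0) (c : E)
    {g : E → F} (hg : Integrable g μ) : Integrable (fun x => g (c + f x)) μ := by
  have he : MeasurableEmbedding f :=
    (f.equivOfDetNeZero hf).toContinuousLinearEquiv.toHomeomorph.toMeasurableEquiv
      |>.measurableEmbedding
  refine (he.integrable_map_iff (g := fun y => g (c + y))).mp ?_
  rw [Measure.map_linearMap_addHaar_eq_smul_addHaar μ hf]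
  exact (hg.comp_add_left c).smul_measure ENNReal.ofReal_ne_top

end ChangeOfVariables

section Moyal

open Complex

variable {d : ℕ} {ϑ : Matrix (Fin d) (Fin d) ℝ}

theorem moyal_eq_integral_mul_integral (hϑinv : IsUnit ϑ.det)
    (f₁ f₂ : SchwartzMap (Fin d → ℝ) ℂ) (x : Fin d → ℝ) :
    moyal d ϑ f₁ f₂ x = (((2 * Real.pi) ^ d : ℝ) : ℂ)⁻¹ *
      ∫ y, f₁ y * ∫ t, f₂ (x + (1 / 2 : ℝ) • ϑ *ᵥ t) * exp (I * ((t ⬝ᵥ (x - y) : ℝ) : ℂ)) := by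
  set F : (Fin d → ℝ) → (Fin d → ℝ) → ℂ := fun t y =>
    f₁ y * (f₂ (x + (1 / 2 : ℝ) • ϑ *ᵥ t) * exp (I * ((t ⬝ᵥ (x - y) : ℝ) : ℂ)))
  have hF_cont : Continuous (Function.uncurry F) := by
    simp only [F, Function.uncurry_def]
    fun_prop
  have hf₂_int : Integrable fun t => f₂ (x + (1 / 2 : ℝ) • ϑ *ᵥ t) :=
    f₂.integrable.comp_add_linearMap volume (f := (1 / 2 : ℝ) • Matrix.toLin' ϑ)
      (by simp [LinearMap.det_smul, hϑinv.ne_zero]) x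
  have hF_int : Integrable (Function.uncurry F) (volume.prod volume) := by
    refine (hf₂_int.norm.mul_prod f₁.integrable.norm).mono' hF_cont.aestronglyMeasurable
      (.of_forall fun ⟨t, y⟩ => ?_)
    simp only [F, Function.uncurry_apply_pair, norm_mul, norm_exp_I_mul_ofReal, mul_one]
    exact (mul_comm _ _).le
  have hF_inner : ∀ t, fourierT d f₁ t * f₂ (x + (1 / 2 : ℝ) • ϑ *ᵥ t) *
      exp (I * ((t ⬝ᵥ x : ℝ) : ℂ)) = ∫ y, F t y := by
    intro t
    rw [fourierT, mul_assoc, ← integral_mul_const]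
    refine integral_congr_ae (.of_forall fun y => ?_)
    simp only [F, dotProduct_sub, dotProduct_comm t y]
    rw [ofReal_sub, mul_sub, sub_eq_neg_add, ← neg_mul, exp_add]
    ring
  rw [moyal, integral_congr_ae (.of_forall hF_inner), integral_integral_swap hF_int]
  simp only [F, integral_const_mul]

theorem integral_half_mulVec_mul_exp_eq_symplFTBar (hϑ : ϑᵀ = -ϑ) (hϑinv : IsUnit ϑ.det)
    (f : (Fin d → ℝ) → ℂ) (x z : Fin d → ℝ) :
    ∫ t : Fin d → ℝ, f (x + (1 / 2 : ℝ) • ϑ *ᵥ t) * exp (I * ((t ⬝ᵥ z : ℝ) : ℂ)) =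
      ((2 ^ d / |ϑ.det| : ℝ) : ℂ) *
        (symplFTBar d ϑ f z * exp (2 * I * ((x ⬝ᵥ ϑ⁻¹ *ᵥ z : ℝ) : ℂ))) := by
  set L : (Fin d → ℝ) →ₗ[ℝ] Fin d → ℝ := (1 / 2 : ℝ) • Matrix.toLin' ϑ
  have hL : LinearMap.det L = (1 / 2) ^ d * ϑ.det := by
    simp [L, LinearMap.det_smul, LinearMap.det_toLin']
  set G : (Fin d → ℝ) → ℂ := fun u => f u * exp (-2 * I * (((u - x) ⬝ᵥ ϑ⁻¹ *ᵥ z : ℝ) : ℂ))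
  have hϑ_ϑinv : ∀ t, (ϑ *ᵥ t) ⬝ᵥ ϑ⁻¹ *ᵥ z = -(t ⬝ᵥ z) := fun t => by
    rw [dotProduct_comm, Matrix.dotProduct_mulVec_eq_neg_of_transpose_eq_neg hϑ, mulVec_mulVec,
      mul_nonsing_inv _ hϑinv, one_mulVec]
  have hG : ∀ t, f (x + (1 / 2 : ℝ) • ϑ *ᵥ t) * exp (I * ((t ⬝ᵥ z : ℝ) : ℂ)) = G (x + L t) := by
    intro t
    simp only [G, L, LinearMap.smul_apply, Matrix.toLin'_apply, add_sub_cancel_left,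
      smul_dotProduct, hϑ_ϑinv, smul_eq_mul]
    congr 2
    push_cast
    ring
  have hG_split : ∀ u, G u = f u * exp (-2 * I * ((u ⬝ᵥ ϑ⁻¹ *ᵥ z : ℝ) : ℂ)) *
      exp (2 * I * ((x ⬝ᵥ ϑ⁻¹ *ᵥ z : ℝ) : ℂ)) := by
    intro u
    simp only [G, sub_dotProduct, mul_assoc, ← exp_add]
    congr 2
    push_cast
    ring
  rw [integral_congr_ae (.of_forall hG),
    integral_comp_add_linearMap volume (by simp [hL, hϑinv.ne_zero]) x G, hL,
    integral_congr_ae (.of_forall hG_split), integral_mul_const, symplFTBar, real_smul]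
  congr 2
  simp [abs_mul, div_eq_mul_inv, mul_comm]

end Moyal

theorem moyal_as_twisted_convolution_right_general
    (d : ℕ) (ϑ : Matrix (Fin d) (Fin d) ℝ) (hϑ : ϑᵀ = -ϑ)
    (hϑinv : IsUnit ϑ.det)
    (f₁ f₂ : SchwartzMap (Fin d → ℝ) ℂ) (x : Fin d → ℝ) :
    moyal d ϑ ⇑f₁ ⇑f₂ x =
      (((Real.pi ^ d * ϑ.det : ℝ)) : ℂ)⁻¹ *
        ∫ t : Fin d → ℝ, f₁ t * symplFTBar d ϑ (⇑f₂) (x - t) *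
          Complex.exp (-2 * Complex.I * ((x ⬝ᵥ ϑ⁻¹.mulVec t : ℝ) : ℂ)) ∧
    moyal d ϑ ⇑f₁ ⇑f₂ x =
      (((Real.pi ^ d * ϑ.det : ℝ)) : ℂ)⁻¹ *
        twConv d (-(4 : ℝ) • ϑ⁻¹) (⇑f₁) (symplFTBar d ϑ ⇑f₂) x := by
  have hdet : 0 < ϑ.det := det_pos_of_transpose_eq_neg hϑ hϑinv.ne_zero
  have h_const : (((2 * Real.pi) ^ d : ℝ) : ℂ)⁻¹ * ((2 ^ d / |ϑ.det| : ℝ) : ℂ) =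
      (((Real.pi ^ d * ϑ.det : ℝ)) : ℂ)⁻¹ := by
    rw [abs_of_pos hdet, mul_pow]
    push_cast
    field_simp
  have h_first : moyal d ϑ ⇑f₁ ⇑f₂ x = (((Real.pi ^ d * ϑ.det : ℝ)) : ℂ)⁻¹ *
      ∫ t : Fin d → ℝ, f₁ t * symplFTBar d ϑ (⇑f₂) (x - t) *
        Complex.exp (-2 * Complex.I * ((x ⬝ᵥ ϑ⁻¹.mulVec t : ℝ) : ℂ)) := by
    simp_rw [moyal_eq_integral_mul_integral hϑinv,
      integral_half_mulVec_mul_exp_eq_symplFTBar hϑ hϑinv, mulVec_sub, dotProduct_sub,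
      dotProduct_inv_mulVec_self_of_transpose_eq_neg hϑ hϑinv, zero_sub,
      mul_left_comm _ ((_ : ℝ) : ℂ), integral_const_mul, ← mul_assoc, h_const]
    congr 1
    refine integral_congr_ae (.of_forall fun t => ?_)
    push_cast
    ring_nf
  refine ⟨h_first, ?_⟩
  rw [h_first, twConv]
  congr 1
  refine integral_congr_ae (.of_forall fun t => ?_)
  simp only [smul_mulVec, dotProduct_smul, smul_eq_mul]
  push_cast
  ring_nf

theorem moyal_as_twisted_convolution_right
    (d : ℕ) (hd : 1 ≤ d) (ϑ : Matrix (Fin d) (Fin d) ℝ) (hϑ : ϑᵀ = -ϑ)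
    (hϑinv : IsUnit ϑ.det)
    (f₁ f₂ : SchwartzMap (Fin d → ℝ) ℂ) (x : Fin d → ℝ) :
    moyal d ϑ ⇑f₁ ⇑f₂ x =
      (((Real.pi ^ d * ϑ.det : ℝ)) : ℂ)⁻¹ *
        ∫ t : Fin d → ℝ, f₁ t * symplFTBar d ϑ (⇑f₂) (x - t) *
          Complex.exp (-2 * Complex.I * ((x ⬝ᵥ ϑ⁻¹.mulVec t : ℝ) : ℂ)) ∧
    moyal d ϑ ⇑f₁ ⇑f₂ x =
      (((Real.pi ^ d * ϑ.det : ℝ)) : ℂ)⁻¹ *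
        twConv d (-(4 : ℝ) • ϑ⁻¹) (⇑f₁) (symplFTBar d ϑ ⇑f₂) x :=
  moyal_as_twisted_convolution_right_general d ϑ hϑ hϑinv f₁ f₂ x
end

section
/- Let β > 0, let N ∈ ℝ, N₀ ≥ 0 and B > 0, and let h, f₀ : ℝ^d → ℂ be smooth with ‖h‖_{−N₀, B/2} < ∞ and ‖f₀‖_{N+N₀, B/2} < ∞. Then for every ξ ∈ ℝ^d the function h_ξ(x) := h(ξ−x) f₀(x) satisfies ‖h_ξ‖_{N,B} ≤ ‖h‖_{−N₀, B/2} · ‖f₀‖_{N+N₀, B/2} · (1+|ξ|)^{N₀}. (Estimates (6.5)–(6.6) in the proof of Theorem 4.) -/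
/-!
STATEMENT 10 (estimates (6.5)–(6.6) in the proof of Theorem 4).
For `β > 0`, `N ∈ ℝ`, `N₀ ≥ 0`, `B > 0` and smooth `h, f₀ : ℝ^d → ℂ` with
`‖h‖_{−N₀,B/2} < ∞` and `‖f₀‖_{N+N₀,B/2} < ∞`, the function
`h_ξ(x) = h(ξ−x) f₀(x)` satisfies
`‖h_ξ‖_{N,B} ≤ ‖h‖_{−N₀,B/2} ‖f₀‖_{N+N₀,B/2} (1+|ξ|)^{N₀}`,
where `‖f‖_{N,B} = sup_{x,κ} (1+|x|)^N |∂^κ f(x)| / (B^{|κ|} κ^{βκ})`.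
-/

open scoped ENNReal

/-- The first-order partial derivative `∂_i f`. -/
noncomputable def pderivOne (d : ℕ) (i : Fin d)
    (f : EuclideanSpace ℝ (Fin d) → ℂ) : EuclideanSpace ℝ (Fin d) → ℂ :=
  fun x => fderiv ℝ f x (EuclideanSpace.single i (1 : ℝ))

/-- The partial derivative `∂^κ f` of multi-order `κ`. -/
noncomputable def pderivMulti (d : ℕ) (κ : Fin d → ℕ)
    (f : EuclideanSpace ℝ (Fin d) → ℂ) : EuclideanSpace ℝ (Fin d) → ℂ :=
  (List.finRange d).foldr (fun i g => (pderivOne d i)^[κ i] g) f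

/-- The (possibly infinite) Gel'fand–Shilov-type norm
`‖f‖_{N,B} = sup_{x,κ} (1+|x|)^N |∂^κ f(x)| / (B^{|κ|} κ^{βκ})`,
with `κ^{βκ} = ∏ i, (κ i)^{β κ i}` and the convention `0^0 = 1`. -/
noncomputable def gsNorm (d : ℕ) (β N B : ℝ)
    (f : EuclideanSpace ℝ (Fin d) → ℂ) : ℝ≥0∞ :=
  ⨆ (x : EuclideanSpace ℝ (Fin d)) (κ : Fin d → ℕ),
    ENNReal.ofReal ((1 + ‖x‖) ^ N * ‖pderivMulti d κ f x‖ /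
      (B ^ (∑ i, κ i) * ∏ i, ((κ i : ℝ) ^ (β * (κ i : ℝ)))))

variable {d : ℕ}

lemma contDiff_pderivOne {f : EuclideanSpace ℝ (Fin d) → ℂ} (i : Fin d)
    (hf : ContDiff ℝ (⊤ : ℕ∞) f) : ContDiff ℝ (⊤ : ℕ∞) (pderivOne d i f) :=
  (hf.fderiv_right (le_refl _)).clm_apply contDiff_const

lemma contDiff_pderivOne_iterate {f : EuclideanSpace ℝ (Fin d) → ℂ} (i : Fin d) (n : ℕ)
    (hf : ContDiff ℝ (⊤ : ℕ∞) f) : ContDiff ℝ (⊤ : ℕ∞) ((pderivOne d i)^[n] f) := by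
  induction n with
  | zero => exact hf
  | succ n ih => rw [Function.iterate_succ_apply']; exact contDiff_pderivOne i ih

lemma pderivOne_mul {u v : EuclideanSpace ℝ (Fin d) → ℂ} (i : Fin d)
    (hu : ContDiff ℝ (⊤ : ℕ∞) u) (hv : ContDiff ℝ (⊤ : ℕ∞) v) :
    pderivOne d i (fun x => u x * v x) =
      fun x => pderivOne d i u x * v x + u x * pderivOne d i v x := by
  funext x
  unfold pderivOne
  rw [fderiv_fun_mul (hu.differentiable (by simp)).differentiableAt
    (hv.differentiable (by simp)).differentiableAt]
  simp only [ContinuousLinearMap.add_apply, ContinuousLinearMap.smul_apply, smul_eq_mul]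
  ring

lemma pderivOne_const_mul {u : EuclideanSpace ℝ (Fin d) → ℂ} (i : Fin d) (c : ℂ)
    (hu : ContDiff ℝ (⊤ : ℕ∞) u) :
    pderivOne d i (fun x => c * u x) = fun x => c * pderivOne d i u x := by
  funext x
  unfold pderivOne
  rw [fderiv_const_mul (hu.differentiable (by simp)).differentiableAt]
  simp

lemma pderivOne_fun_sum {α : Type*} (s : Finset α) (F : α → EuclideanSpace ℝ (Fin d) → ℂ)
    (i : Fin d) (hF : ∀ a ∈ s, ContDiff ℝ (⊤ : ℕ∞) (F a)) :
    pderivOne d i (fun x => ∑ a ∈ s, F a x) = fun x => ∑ a ∈ s, pderivOne d i (F a) x := by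
  funext x
  unfold pderivOne
  rw [fderiv_fun_sum (fun a ha => ((hF a ha).differentiable (by simp)).differentiableAt)]
  simp

lemma iterate_pderivOne_const_mul {u : EuclideanSpace ℝ (Fin d) → ℂ} (i : Fin d) (c : ℂ) (n : ℕ)
    (hu : ContDiff ℝ (⊤ : ℕ∞) u) :
    (pderivOne d i)^[n] (fun x => c * u x) = fun x => c * (pderivOne d i)^[n] u x := by
  induction n with
  | zero => rfl
  | succ n ih =>
    rw [Function.iterate_succ_apply', Function.iterate_succ_apply', ih,
      pderivOne_const_mul i c (contDiff_pderivOne_iterate i n hu)]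

lemma iterate_pderivOne_fun_sum {α : Type*} (s : Finset α) (F : α → EuclideanSpace ℝ (Fin d) → ℂ)
    (i : Fin d) (n : ℕ) (hF : ∀ a ∈ s, ContDiff ℝ (⊤ : ℕ∞) (F a)) :
    (pderivOne d i)^[n] (fun x => ∑ a ∈ s, F a x) =
      fun x => ∑ a ∈ s, (pderivOne d i)^[n] (F a) x := by
  induction n with
  | zero => rfl
  | succ n ih =>
    rw [Function.iterate_succ_apply', ih,
      pderivOne_fun_sum s _ i (fun a ha => contDiff_pderivOne_iterate i n (hF a ha))]
    funext x
    exact Finset.sum_congr rfl fun a _ =>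
      congrFun (Function.iterate_succ_apply' (pderivOne d i) n (F a)).symm x

lemma choose_sum_succ (a b : ℕ → ℂ) (n : ℕ) :
    ∑ j ∈ Finset.range (n + 2), ((n+1).choose j : ℂ) * (a j * b (n + 1 - j)) =
    ∑ j ∈ Finset.range (n + 1), (n.choose j : ℂ) *
      (a (j+1) * b (n - j) + a j * b (n + 1 - j)) := by
  have key : ∑ j ∈ Finset.range (n + 2), ((n+1).choose j : ℂ) * (a j * b (n + 1 - j))
      = (∑ j ∈ Finset.range (n + 1), (n.choose j : ℂ) * (a (j+1) * b (n - j)))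
        + ∑ j ∈ Finset.range (n + 1), (n.choose j : ℂ) * (a j * b (n + 1 - j)) := by
    rw [Finset.sum_range_succ' (fun j => ((n+1).choose j : ℂ) * (a j * b (n + 1 - j))) (n+1)]
    have h1 : ∀ j, ((n+1).choose (j+1) : ℂ) = (n.choose j : ℂ) + (n.choose (j+1) : ℂ) := by
      intro j; rw [Nat.choose_succ_succ]; push_cast; ring
    have h2 : ∑ j ∈ Finset.range (n + 1), ((n+1).choose (j+1) : ℂ) * (a (j+1) * b (n + 1 - (j+1)))
        = (∑ j ∈ Finset.range (n + 1), (n.choose j : ℂ) * (a (j+1) * b (n - j)))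
          + ∑ j ∈ Finset.range (n + 1), (n.choose (j+1) : ℂ) * (a (j+1) * b (n - j)) := by
      rw [← Finset.sum_add_distrib]
      refine Finset.sum_congr rfl fun j hj => ?_
      have : n + 1 - (j + 1) = n - j := by omega
      rw [this, h1]; ring
    rw [h2]
    have h3 : (∑ j ∈ Finset.range (n + 1), (n.choose (j+1) : ℂ) * (a (j+1) * b (n - j)))
        + ((n+1).choose 0 : ℂ) * (a 0 * b (n + 1 - 0))
        = ∑ j ∈ Finset.range (n + 1), (n.choose j : ℂ) * (a j * b (n + 1 - j)) := by
      have h4 : ∑ j ∈ Finset.range (n + 2), (n.choose j : ℂ) * (a j * b (n + 1 - j))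
          = (∑ j ∈ Finset.range (n + 1), (n.choose (j+1) : ℂ) * (a (j+1) * b (n + 1 - (j+1))))
            + (n.choose 0 : ℂ) * (a 0 * b (n + 1 - 0)) :=
        Finset.sum_range_succ' _ (n+1)
      have h5 : ∑ j ∈ Finset.range (n + 2), (n.choose j : ℂ) * (a j * b (n + 1 - j))
          = ∑ j ∈ Finset.range (n + 1), (n.choose j : ℂ) * (a j * b (n + 1 - j)) := by
        rw [Finset.sum_range_succ]
        simp [Nat.choose_eq_zero_of_lt (Nat.lt_succ_self n)]
      have h6 : ∀ j ∈ Finset.range (n+1),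
          (n.choose (j+1) : ℂ) * (a (j+1) * b (n + 1 - (j+1)))
          = (n.choose (j+1) : ℂ) * (a (j+1) * b (n - j)) := by
        intro j hj
        have e : n + 1 - (j+1) = n - j := by omega
        rw [e]
      rw [Finset.sum_congr rfl h6] at h4
      simp only [Nat.choose_zero_right, Nat.cast_one] at h4 ⊢
      rw [← h5, h4]
    rw [add_assoc, h3]
  rw [key, ← Finset.sum_add_distrib]
  exact Finset.sum_congr rfl fun j hj => by ring

lemma iterate_pderivOne_mul {u v : EuclideanSpace ℝ (Fin d) → ℂ} (i : Fin d) (n : ℕ)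
    (hu : ContDiff ℝ (⊤ : ℕ∞) u) (hv : ContDiff ℝ (⊤ : ℕ∞) v) :
    (pderivOne d i)^[n] (fun x => u x * v x) =
      fun x => ∑ j ∈ Finset.range (n + 1), (n.choose j : ℂ) *
        ((pderivOne d i)^[j] u x * (pderivOne d i)^[n-j] v x) := by
  induction n with
  | zero => simp
  | succ n ih =>
    rw [Function.iterate_succ_apply', ih]
    rw [pderivOne_fun_sum (Finset.range (n+1))
      (fun j x => (n.choose j : ℂ) * ((pderivOne d i)^[j] u x * (pderivOne d i)^[n-j] v x)) i
      (fun j hj => (contDiff_const.mul ((contDiff_pderivOne_iterate i j hu).mul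
        (contDiff_pderivOne_iterate i (n-j) hv))))]
    funext x
    rw [choose_sum_succ (fun j => (pderivOne d i)^[j] u x) (fun j => (pderivOne d i)^[j] v x) n]
    refine Finset.sum_congr rfl fun j hj => ?_
    rw [pderivOne_const_mul i _ ((contDiff_pderivOne_iterate i j hu).mul
      (contDiff_pderivOne_iterate i (n-j) hv)),
      pderivOne_mul i (contDiff_pderivOne_iterate i j hu) (contDiff_pderivOne_iterate i (n-j) hv)]
    have e1 : n + 1 - (j + 1) = n - j := by omega
    have hj' : j ≤ n := by simpa [Nat.lt_succ_iff] using hj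
    have e2 : n + 1 - j = (n - j) + 1 := by omega
    simp only [e1, e2, ← Function.iterate_succ_apply' (pderivOne d i)]

noncomputable def Dlist (d : ℕ) (L : List (Fin d)) (m : Fin d → ℕ)
    (f : EuclideanSpace ℝ (Fin d) → ℂ) : EuclideanSpace ℝ (Fin d) → ℂ :=
  L.foldr (fun i g => (pderivOne d i)^[m i] g) f

lemma Dlist_nil (m : Fin d → ℕ) (f : EuclideanSpace ℝ (Fin d) → ℂ) :
    Dlist d [] m f = f := rfl

lemma Dlist_cons (i : Fin d) (L : List (Fin d)) (m : Fin d → ℕ)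
    (f : EuclideanSpace ℝ (Fin d) → ℂ) :
    Dlist d (i :: L) m f = (pderivOne d i)^[m i] (Dlist d L m f) := rfl

lemma contDiff_Dlist (L : List (Fin d)) (m : Fin d → ℕ) {f : EuclideanSpace ℝ (Fin d) → ℂ}
    (hf : ContDiff ℝ (⊤ : ℕ∞) f) : ContDiff ℝ (⊤ : ℕ∞) (Dlist d L m f) := by
  induction L with
  | nil => exact hf
  | cons i L ih => exact contDiff_pderivOne_iterate i (m i) ih

lemma Dlist_congr (L : List (Fin d)) {m m' : Fin d → ℕ} (f : EuclideanSpace ℝ (Fin d) → ℂ)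
    (h : ∀ i ∈ L, m i = m' i) : Dlist d L m f = Dlist d L m' f := by
  induction L with
  | nil => rfl
  | cons i L ih =>
    rw [Dlist_cons, Dlist_cons, ih (fun j hj => h j (List.mem_cons_of_mem i hj)),
      h i List.mem_cons_self]

lemma sum_piFinset_update {M : Type*} [AddCommMonoid M] (c : Fin d → ℕ) (i : Fin d)
    (hci : c i = 0) (n : ℕ) (F : (Fin d → ℕ) → M) :
    ∑ ρ ∈ Fintype.piFinset (fun i' => Finset.range (Function.update c i n i' + 1)), F ρ
    = ∑ j ∈ Finset.range (n+1),
        ∑ κ' ∈ Fintype.piFinset (fun i' => Finset.range (c i' + 1)), F (Function.update κ' i j) := by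
  rw [← Finset.sum_product' (f := fun j κ' => F (Function.update κ' i j))]
  refine Finset.sum_bij' (fun ρ _ => (ρ i, Function.update ρ i 0))
    (fun p _ => Function.update p.2 i p.1) ?_ ?_ ?_ ?_ ?_
  · intro ρ hρ
    rw [Fintype.mem_piFinset] at hρ
    simp only [Finset.mem_product, Fintype.mem_piFinset]
    refine ⟨by simpa using hρ i, fun i' => ?_⟩
    by_cases hi' : i' = i
    · subst hi'; simp
    · have := hρ i'
      simpa [Function.update_of_ne hi'] using this
  · intro p hp
    simp only [Finset.mem_product, Fintype.mem_piFinset] at hp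
    rw [Fintype.mem_piFinset]
    intro i'
    by_cases hi' : i' = i
    · subst hi'; simpa using hp.1
    · simpa [Function.update_of_ne hi'] using hp.2 i'
  · intro ρ hρ
    simp only [Function.update_idem]
    exact Function.update_eq_self i ρ
  · intro p hp
    simp only [Finset.mem_product, Fintype.mem_piFinset] at hp
    have h2 : p.2 i = 0 := by
      have := hp.2 i; rw [hci] at this; simpa using this
    simp only [Function.update_self, Function.update_idem]
    rw [← h2, Function.update_eq_self]
  · intro ρ hρ
    simp only [Function.update_idem]
    rw [Function.update_eq_self]

lemma Dlist_cons_update {i : Fin d} {L : List (Fin d)} (hiL : i ∉ L) (j : ℕ) (κ' : Fin d → ℕ)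
    (f : EuclideanSpace ℝ (Fin d) → ℂ) :
    Dlist d (i::L) (Function.update κ' i j) f = (pderivOne d i)^[j] (Dlist d L κ' f) := by
  rw [Dlist_cons, Function.update_self,
    Dlist_congr L f (fun i' hi' =>
      Function.update_of_ne (fun h => hiL (by rwa [h] at hi')) j κ')]

lemma Dlist_mul (L : List (Fin d)) (m : Fin d → ℕ) (u v : EuclideanSpace ℝ (Fin d) → ℂ)
    (hu : ContDiff ℝ (⊤ : ℕ∞) u) (hv : ContDiff ℝ (⊤ : ℕ∞) v) :
    L.Nodup →
    Dlist d L m (fun x => u x * v x) = fun x =>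
      ∑ κ' ∈ Fintype.piFinset (fun i' => Finset.range ((if i' ∈ L then m i' else 0) + 1)),
        ((∏ i', (if i' ∈ L then m i' else 0).choose (κ' i') : ℕ) : ℂ) *
          (Dlist d L κ' u x *
           Dlist d L (fun i' => (if i' ∈ L then m i' else 0) - κ' i') v x) := by
  induction L with
  | nil =>
    intro _
    funext x
    simp only [List.not_mem_nil, if_false]
    rw [show (fun i' : Fin d => Finset.range (0+1)) =
        (fun i' : Fin d => ({(fun _ : Fin d => 0) i'} : Finset ℕ)) by
      funext; simp [Finset.range_one]]
    rw [Fintype.piFinset_singleton, Finset.sum_singleton]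
    simp [Dlist_nil]
  | cons i L ih =>
    intro hL
    have hiL : i ∉ L := (List.nodup_cons.1 hL).1
    have hL' : L.Nodup := (List.nodup_cons.1 hL).2
    have hsm : ∀ κ' : Fin d → ℕ, ContDiff ℝ (⊤ : ℕ∞) (fun x =>
        ((∏ i', (if i' ∈ L then m i' else 0).choose (κ' i') : ℕ) : ℂ) *
          (Dlist d L κ' u x *
           Dlist d L (fun i' => (if i' ∈ L then m i' else 0) - κ' i') v x)) :=
      fun κ' => contDiff_const.mul ((contDiff_Dlist L κ' hu).mul (contDiff_Dlist L _ hv))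
    rw [Dlist_cons, ih hL', iterate_pderivOne_fun_sum _ _ i (m i) (fun κ' _ => hsm κ')]
    -- pointwise identity
    funext x
    -- rewrite the cons-if as an update of the L-if
    have hif : ∀ i' : Fin d, (if i' ∈ i :: L then m i' else 0) =
        Function.update (fun i'' => if i'' ∈ L then m i'' else 0) i (m i) i' := by
      intro i'
      by_cases hi' : i' = i
      · subst hi'; simp
      · rw [Function.update_of_ne hi']
        simp [List.mem_cons, hi']
    simp only [hif]
    rw [sum_piFinset_update (fun i'' => if i'' ∈ L then m i'' else 0) i (by simp [hiL]) (m i)]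
    -- transform the LHS summands
    have hterm : ∀ κ' ∈ Fintype.piFinset
        (fun i' => Finset.range ((if i' ∈ L then m i' else 0) + 1)),
        (pderivOne d i)^[m i] (fun x =>
          ((∏ i', (if i' ∈ L then m i' else 0).choose (κ' i') : ℕ) : ℂ) *
            (Dlist d L κ' u x *
             Dlist d L (fun i' => (if i' ∈ L then m i' else 0) - κ' i') v x)) x
        = ∑ j ∈ Finset.range (m i + 1),
            ((∏ i', (if i' ∈ L then m i' else 0).choose (κ' i') : ℕ) : ℂ) *
            (((m i).choose j : ℂ) *
              ((pderivOne d i)^[j] (Dlist d L κ' u) x *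
               (pderivOne d i)^[m i - j]
                 (Dlist d L (fun i' => (if i' ∈ L then m i' else 0) - κ' i') v) x)) := by
      intro κ' _
      rw [iterate_pderivOne_const_mul i _ (m i)
          ((contDiff_Dlist L κ' hu).mul (contDiff_Dlist L _ hv)),
        iterate_pderivOne_mul i (m i) (contDiff_Dlist L κ' hu) (contDiff_Dlist L _ hv)]
      simp only [Finset.mul_sum]
    rw [Finset.sum_congr rfl hterm, Finset.sum_comm]
    refine Finset.sum_congr rfl fun j hj => ?_
    refine Finset.sum_congr rfl fun κ' hκ' => ?_
    -- now the termwise identity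
    have hκ'i : κ' i = 0 := by
      have := (Fintype.mem_piFinset.1 hκ') i
      simp [hiL] at this
      exact this
    -- (b)
    have hb : Dlist d (i::L) (Function.update κ' i j) u
        = (pderivOne d i)^[j] (Dlist d L κ' u) := Dlist_cons_update hiL j κ' u
    -- (c)
    have hw : (fun i' => Function.update (fun i'' => if i'' ∈ L then m i'' else 0) i (m i) i'
          - Function.update κ' i j i')
        = Function.update (fun i' => (if i' ∈ L then m i' else 0) - κ' i') i (m i - j) := by
      funext i'
      by_cases hi' : i' = i
      · subst hi'; simp
      · simp [Function.update_of_ne hi']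
    have hc : Dlist d (i::L) (fun i' =>
          Function.update (fun i'' => if i'' ∈ L then m i'' else 0) i (m i) i'
          - Function.update κ' i j i') v
        = (pderivOne d i)^[m i - j]
            (Dlist d L (fun i' => (if i' ∈ L then m i' else 0) - κ' i') v) := by
      rw [hw]; exact Dlist_cons_update hiL (m i - j) _ v
    -- (a) coefficient
    have ha : (∏ i', (Function.update (fun i'' => if i'' ∈ L then m i'' else 0) i (m i) i').choose
          (Function.update κ' i j i'))
        = (m i).choose j * ∏ i', (if i' ∈ L then m i' else 0).choose (κ' i') := by
      rw [← Finset.mul_prod_erase Finset.univ _ (Finset.mem_univ i),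
        ← Finset.mul_prod_erase Finset.univ
          (fun i' => (if i' ∈ L then m i' else 0).choose (κ' i')) (Finset.mem_univ i)]
      simp only [Function.update_self]
      rw [Finset.prod_congr rfl (fun i' hi' => by
        rw [Function.update_of_ne (Finset.ne_of_mem_erase hi'),
          Function.update_of_ne (Finset.ne_of_mem_erase hi')])]
      simp [hiL, hκ'i]
    rw [hb, hc, ha]
    push_cast
    ring

lemma pderivOne_comp_sub (i : Fin d) {F : EuclideanSpace ℝ (Fin d) → ℂ}
    (hF : ContDiff ℝ (⊤ : ℕ∞) F) (ξ : EuclideanSpace ℝ (Fin d)) :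
    pderivOne d i (fun x => F (ξ - x)) = fun x => -(pderivOne d i F (ξ - x)) := by
  funext x
  unfold pderivOne
  have hg : DifferentiableAt ℝ (fun y : EuclideanSpace ℝ (Fin d) => ξ - y) x :=
    (differentiable_const ξ).sub differentiable_id |>.differentiableAt
  have hcomp : fderiv ℝ (fun y => F (ξ - y)) x
      = (fderiv ℝ F (ξ - x)).comp (fderiv ℝ (fun y : EuclideanSpace ℝ (Fin d) => ξ - y) x) :=
    fderiv_comp x (hF.differentiable (by simp)).differentiableAt hg
  rw [hcomp, fderiv_const_sub, fderiv_id']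
  simp

lemma contDiff_comp_sub {F : EuclideanSpace ℝ (Fin d) → ℂ} (hF : ContDiff ℝ (⊤ : ℕ∞) F)
    (ξ : EuclideanSpace ℝ (Fin d)) : ContDiff ℝ (⊤ : ℕ∞) (fun x => F (ξ - x)) :=
  hF.comp (contDiff_const.sub contDiff_id)

lemma iterate_pderivOne_comp_sub (i : Fin d) (n : ℕ) {F : EuclideanSpace ℝ (Fin d) → ℂ}
    (hF : ContDiff ℝ (⊤ : ℕ∞) F) (ξ : EuclideanSpace ℝ (Fin d)) :
    (pderivOne d i)^[n] (fun x => F (ξ - x)) =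
      fun x => (-1 : ℂ)^n * (pderivOne d i)^[n] F (ξ - x) := by
  induction n with
  | zero => simp
  | succ n ih =>
    rw [Function.iterate_succ_apply', ih]
    have hG : ContDiff ℝ (⊤ : ℕ∞) ((pderivOne d i)^[n] F) := contDiff_pderivOne_iterate i n hF
    rw [pderivOne_const_mul i _ (contDiff_comp_sub hG ξ), pderivOne_comp_sub i hG ξ]
    funext x
    rw [← Function.iterate_succ_apply' (pderivOne d i) n F]
    ring

lemma Dlist_comp_sub (L : List (Fin d)) (κ : Fin d → ℕ) {F : EuclideanSpace ℝ (Fin d) → ℂ}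
    (hF : ContDiff ℝ (⊤ : ℕ∞) F) (ξ : EuclideanSpace ℝ (Fin d)) :
    Dlist d L κ (fun x => F (ξ - x)) =
      fun x => (-1 : ℂ)^((L.map κ).sum) * Dlist d L κ F (ξ - x) := by
  induction L with
  | nil => simp [Dlist_nil]
  | cons i L ih =>
    rw [Dlist_cons, ih,
      iterate_pderivOne_const_mul i _ (κ i) (contDiff_comp_sub (contDiff_Dlist L κ hF) ξ),
      iterate_pderivOne_comp_sub i (κ i) (contDiff_Dlist L κ hF) ξ]
    funext x
    rw [← Dlist_cons]
    simp only [List.map_cons, List.sum_cons, pow_add]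
    ring

lemma abs_Dlist_comp_sub (L : List (Fin d)) (κ : Fin d → ℕ) {F : EuclideanSpace ℝ (Fin d) → ℂ}
    (hF : ContDiff ℝ (⊤ : ℕ∞) F) (ξ x : EuclideanSpace ℝ (Fin d)) :
    ‖Dlist d L κ (fun y => F (ξ - y)) x‖ = ‖Dlist d L κ F (ξ - x)‖ := by
  rw [Dlist_comp_sub L κ hF ξ]
  simp [map_mul, abs_pow]

lemma pderivMulti_eq_Dlist (κ : Fin d → ℕ) (f : EuclideanSpace ℝ (Fin d) → ℂ) :
    pderivMulti d κ f = Dlist d (List.finRange d) κ f := rfl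

lemma rpow_self_pos {β : ℝ} (k : ℕ) : 0 < (k : ℝ) ^ (β * (k : ℝ)) := by
  rcases Nat.eq_zero_or_pos k with hk | hk
  · subst hk; simp
  · exact Real.rpow_pos_of_pos (by exact_mod_cast hk) _

lemma prodP_pos {β : ℝ} (κ : Fin d → ℕ) : 0 < ∏ i, ((κ i : ℝ) ^ (β * (κ i : ℝ))) :=
  Finset.prod_pos fun i _ => rpow_self_pos (κ i)

lemma gsNorm_bound {β N B : ℝ} (hB : 0 < B) {f : EuclideanSpace ℝ (Fin d) → ℂ}
    (hf : gsNorm d β N B f ≠ ⊤) (x : EuclideanSpace ℝ (Fin d)) (κ : Fin d → ℕ) :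
    (1 + ‖x‖) ^ N * ‖pderivMulti d κ f x‖ ≤
      (gsNorm d β N B f).toReal * (B ^ (∑ i, κ i) * ∏ i, ((κ i : ℝ) ^ (β * (κ i : ℝ)))) := by
  have hden : 0 < B ^ (∑ i, κ i) * ∏ i, ((κ i : ℝ) ^ (β * (κ i : ℝ))) :=
    mul_pos (pow_pos hB _) (prodP_pos κ)
  have hx : 0 < (1 + ‖x‖) ^ N := Real.rpow_pos_of_pos (by positivity) _
  have hnum : 0 ≤ (1 + ‖x‖) ^ N * ‖pderivMulti d κ f x‖ :=
    mul_nonneg hx.le (norm_nonneg _)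
  have hle : ENNReal.ofReal ((1 + ‖x‖) ^ N * ‖pderivMulti d κ f x‖ /
      (B ^ (∑ i, κ i) * ∏ i, ((κ i : ℝ) ^ (β * (κ i : ℝ))))) ≤ gsNorm d β N B f :=
    le_iSup_of_le x (le_iSup_of_le κ le_rfl)
  have := ENNReal.toReal_mono hf hle
  rw [ENNReal.toReal_ofReal (div_nonneg hnum hden.le)] at this
  calc (1 + ‖x‖) ^ N * ‖pderivMulti d κ f x‖
      = ((1 + ‖x‖) ^ N * ‖pderivMulti d κ f x‖ /
          (B ^ (∑ i, κ i) * ∏ i, ((κ i : ℝ) ^ (β * (κ i : ℝ))))) *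
        (B ^ (∑ i, κ i) * ∏ i, ((κ i : ℝ) ^ (β * (κ i : ℝ)))) := by
        rw [div_mul_cancel₀ _ hden.ne']
    _ ≤ _ := by
        apply mul_le_mul_of_nonneg_right this hden.le

lemma rpow_binom_le {β : ℝ} (hβ : 0 < β) {j k : ℕ} (hjk : j ≤ k) :
    (j : ℝ) ^ (β * (j : ℝ)) * ((k - j : ℕ) : ℝ) ^ (β * ((k - j : ℕ) : ℝ)) ≤
      (k : ℝ) ^ (β * (k : ℝ)) := by
  have hnat : j ^ j * (k - j) ^ (k - j) ≤ k ^ k := by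
    calc j ^ j * (k - j) ^ (k - j) ≤ k ^ j * k ^ (k - j) :=
          Nat.mul_le_mul (Nat.pow_le_pow_left hjk j) (Nat.pow_le_pow_left (Nat.sub_le k j) _)
      _ = k ^ k := by rw [← pow_add, Nat.add_sub_cancel' hjk]
  have e : ∀ n : ℕ, (n : ℝ) ^ (β * (n : ℝ)) = ((n ^ n : ℕ) : ℝ) ^ β := by
    intro n
    rw [mul_comm, Real.rpow_mul (Nat.cast_nonneg n), Real.rpow_natCast]
    push_cast
    ring_nf
  rw [e j, e (k - j), e k,
    ← Real.mul_rpow (Nat.cast_nonneg _) (Nat.cast_nonneg _), ← Nat.cast_mul]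
  exact Real.rpow_le_rpow (Nat.cast_nonneg _) (by exact_mod_cast hnat) hβ.le

lemma sum_choose_rpow_le {β : ℝ} (hβ : 0 < β) (k : ℕ) :
    ∑ j ∈ Finset.range (k + 1), (k.choose j : ℝ) *
      ((j : ℝ) ^ (β * (j : ℝ)) * ((k - j : ℕ) : ℝ) ^ (β * ((k - j : ℕ) : ℝ))) ≤
      2 ^ k * (k : ℝ) ^ (β * (k : ℝ)) := by
  calc ∑ j ∈ Finset.range (k + 1), (k.choose j : ℝ) *
        ((j : ℝ) ^ (β * (j : ℝ)) * ((k - j : ℕ) : ℝ) ^ (β * ((k - j : ℕ) : ℝ)))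
      ≤ ∑ j ∈ Finset.range (k + 1), (k.choose j : ℝ) * ((k : ℝ) ^ (β * (k : ℝ))) := by
        refine Finset.sum_le_sum fun j hj => ?_
        have hjk : j ≤ k := by simpa [Nat.lt_succ_iff] using hj
        exact mul_le_mul_of_nonneg_left (rpow_binom_le hβ hjk) (Nat.cast_nonneg _)
    _ = 2 ^ k * (k : ℝ) ^ (β * (k : ℝ)) := by
        rw [← Finset.sum_mul]
        congr 1
        rw [← Nat.cast_sum, Nat.sum_range_choose]
        push_cast
        ring

lemma weight_le {N N₀ : ℝ} (hN₀ : 0 ≤ N₀) (ξ x : EuclideanSpace ℝ (Fin d)) :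
    (1 + ‖x‖) ^ N * (1 + ‖x‖) ^ (-(N + N₀)) * (1 + ‖ξ - x‖) ^ N₀ ≤ (1 + ‖ξ‖) ^ N₀ := by
  have hx : (0:ℝ) < 1 + ‖x‖ := by positivity
  have hξ : (0:ℝ) < 1 + ‖ξ‖ := by positivity
  have h1 : (1 + ‖x‖) ^ N * (1 + ‖x‖) ^ (-(N + N₀)) = (1 + ‖x‖) ^ (-N₀) := by
    rw [← Real.rpow_add hx]; ring_nf
  rw [h1]
  have h2 : (1 + ‖ξ - x‖) ^ N₀ ≤ ((1 + ‖ξ‖) * (1 + ‖x‖)) ^ N₀ := by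
    apply Real.rpow_le_rpow (by positivity) _ hN₀
    have := norm_sub_le ξ x
    nlinarith [norm_nonneg ξ, norm_nonneg x, norm_nonneg (ξ - x)]
  calc (1 + ‖x‖) ^ (-N₀) * (1 + ‖ξ - x‖) ^ N₀
      ≤ (1 + ‖x‖) ^ (-N₀) * ((1 + ‖ξ‖) * (1 + ‖x‖)) ^ N₀ :=
        mul_le_mul_of_nonneg_left h2 (Real.rpow_nonneg hx.le _)
    _ = (1 + ‖ξ‖) ^ N₀ := by
        rw [Real.mul_rpow hξ.le hx.le, ← mul_assoc, mul_comm ((1 + ‖x‖) ^ (-N₀)),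
          mul_assoc, ← Real.rpow_add hx]
        simp

theorem gsNorm_shifted_product_le
    (d : ℕ) (hd : 1 ≤ d) (β : ℝ) (hβ : 0 < β)
    (N N₀ B : ℝ) (hN₀ : 0 ≤ N₀) (hB : 0 < B)
    (h f₀ : EuclideanSpace ℝ (Fin d) → ℂ)
    (hh : ContDiff ℝ (⊤ : ℕ∞) h) (hf₀ : ContDiff ℝ (⊤ : ℕ∞) f₀)
    (hhn : gsNorm d β (-N₀) (B / 2) h ≠ ⊤)
    (hf₀n : gsNorm d β (N + N₀) (B / 2) f₀ ≠ ⊤)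
    (ξ : EuclideanSpace ℝ (Fin d)) :
    gsNorm d β N B (fun x => h (ξ - x) * f₀ x) ≤
      gsNorm d β (-N₀) (B / 2) h * gsNorm d β (N + N₀) (B / 2) f₀ *
        ENNReal.ofReal ((1 + ‖ξ‖) ^ N₀) := by
  have hB2 : (0:ℝ) < B / 2 := by linarith
  set Mh := (gsNorm d β (-N₀) (B / 2) h).toReal with hMh
  set Mf := (gsNorm d β (N + N₀) (B / 2) f₀).toReal with hMf
  have hMh0 : 0 ≤ Mh := ENNReal.toReal_nonneg
  have hMf0 : 0 ≤ Mf := ENNReal.toReal_nonneg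
  have hH : ContDiff ℝ (⊤ : ℕ∞) (fun x => h (ξ - x)) := contDiff_comp_sub hh ξ
  rw [← ENNReal.ofReal_toReal hhn, ← ENNReal.ofReal_toReal hf₀n,
    ← ENNReal.ofReal_mul hMh0, ← ENNReal.ofReal_mul (mul_nonneg hMh0 hMf0)]
  refine iSup_le fun x => iSup_le fun κ => ENNReal.ofReal_le_ofReal ?_
  have hξx : (0:ℝ) < 1 + ‖ξ - x‖ := by positivity
  have hxp : (0:ℝ) < 1 + ‖x‖ := by positivity
  have hden : (0:ℝ) < B ^ (∑ i, κ i) * ∏ i, ((κ i : ℝ) ^ (β * (κ i : ℝ))) :=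
    mul_pos (pow_pos hB _) (prodP_pos κ)
  rw [div_le_iff₀ hden]
  -- Leibniz expansion
  have hLeib := Dlist_mul (List.finRange d) κ (fun y => h (ξ - y)) f₀ hH hf₀ (List.nodup_finRange d)
  simp only [List.mem_finRange, if_true] at hLeib
  have hgx : pderivMulti d κ (fun y => h (ξ - y) * f₀ y) x =
      ∑ κ' ∈ Fintype.piFinset (fun i' => Finset.range (κ i' + 1)),
        ((∏ i', (κ i').choose (κ' i') : ℕ) : ℂ) *
          (Dlist d (List.finRange d) κ' (fun y => h (ξ - y)) x *
           Dlist d (List.finRange d) (fun i' => κ i' - κ' i') f₀ x) := by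
    rw [pderivMulti_eq_Dlist]
    exact congrFun hLeib x
  -- triangle inequality
  have htri : ‖pderivMulti d κ (fun y => h (ξ - y) * f₀ y) x‖ ≤
      ∑ κ' ∈ Fintype.piFinset (fun i' => Finset.range (κ i' + 1)),
        ((∏ i', (κ i').choose (κ' i') : ℕ) : ℝ) *
          (‖pderivMulti d κ' h (ξ - x)‖ *
           ‖pderivMulti d (fun i' => κ i' - κ' i') f₀ x‖) := by
    rw [hgx]
    refine le_trans (norm_sum_le _ _) (le_of_eq (Finset.sum_congr rfl fun κ' _ => ?_))
    rw [norm_mul, norm_mul]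
    rw [abs_Dlist_comp_sub (List.finRange d) κ' hh ξ x, ← pderivMulti_eq_Dlist,
      ← pderivMulti_eq_Dlist]
    simp
  -- per-term bound
  have hterm : ∀ κ' ∈ Fintype.piFinset (fun i' => Finset.range (κ i' + 1)),
      (1 + ‖x‖) ^ N * (((∏ i', (κ i').choose (κ' i') : ℕ) : ℝ) *
          (‖pderivMulti d κ' h (ξ - x)‖ *
           ‖pderivMulti d (fun i' => κ i' - κ' i') f₀ x‖))
      ≤ Mh * Mf * (1 + ‖ξ‖) ^ N₀ * ((B / 2) ^ (∑ i, κ i) *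
          ∏ i, (((κ i).choose (κ' i) : ℝ) *
            ((κ' i : ℝ) ^ (β * (κ' i : ℝ)) *
             ((κ i - κ' i : ℕ) : ℝ) ^ (β * ((κ i - κ' i : ℕ) : ℝ))))) := by
    intro κ' hκ'
    have hle : ∀ i, κ' i ≤ κ i := fun i => by
      have := (Fintype.mem_piFinset.1 hκ') i
      simpa [Nat.lt_succ_iff] using this
    have hb1 : ‖pderivMulti d κ' h (ξ - x)‖ ≤
        (1 + ‖ξ - x‖) ^ N₀ * (Mh * ((B / 2) ^ (∑ i, κ' i) *
          ∏ i, ((κ' i : ℝ) ^ (β * (κ' i : ℝ))))) := by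
      have hone : (1 + ‖ξ - x‖) ^ N₀ * (1 + ‖ξ - x‖) ^ (-N₀) = 1 := by
        rw [← Real.rpow_add hξx]; simp
      calc ‖pderivMulti d κ' h (ξ - x)‖
          = (1 + ‖ξ - x‖) ^ N₀ * ((1 + ‖ξ - x‖) ^ (-N₀) *
              ‖pderivMulti d κ' h (ξ - x)‖) := by
            rw [← mul_assoc, hone, one_mul]
        _ ≤ _ := mul_le_mul_of_nonneg_left (gsNorm_bound hB2 hhn (ξ - x) κ')
              (Real.rpow_nonneg hξx.le _)
    have hb2 : ‖pderivMulti d (fun i' => κ i' - κ' i') f₀ x‖ ≤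
        (1 + ‖x‖) ^ (-(N + N₀)) * (Mf * ((B / 2) ^ (∑ i, (κ i - κ' i)) *
          ∏ i, (((κ i - κ' i : ℕ) : ℝ) ^ (β * ((κ i - κ' i : ℕ) : ℝ))))) := by
      have hone : (1 + ‖x‖) ^ (-(N + N₀)) * (1 + ‖x‖) ^ (N + N₀) = 1 := by
        rw [← Real.rpow_add hxp, show -(N + N₀) + (N + N₀) = 0 by ring, Real.rpow_zero]
      calc ‖pderivMulti d (fun i' => κ i' - κ' i') f₀ x‖
          = (1 + ‖x‖) ^ (-(N + N₀)) * ((1 + ‖x‖) ^ (N + N₀) *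
              ‖pderivMulti d (fun i' => κ i' - κ' i') f₀ x‖) := by
            rw [← mul_assoc, hone, one_mul]
        _ ≤ _ := mul_le_mul_of_nonneg_left
              (gsNorm_bound hB2 hf₀n x (fun i' => κ i' - κ' i'))
              (Real.rpow_nonneg hxp.le _)
    have habs1 : (0:ℝ) ≤ ‖pderivMulti d κ' h (ξ - x)‖ := norm_nonneg _
    have habs2 : (0:ℝ) ≤ ‖pderivMulti d (fun i' => κ i' - κ' i') f₀ x‖ :=
      norm_nonneg _
    have hstep : (1 + ‖x‖) ^ N * (((∏ i', (κ i').choose (κ' i') : ℕ) : ℝ) *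
          (‖pderivMulti d κ' h (ξ - x)‖ *
           ‖pderivMulti d (fun i' => κ i' - κ' i') f₀ x‖))
        ≤ (1 + ‖x‖) ^ N * (((∏ i', (κ i').choose (κ' i') : ℕ) : ℝ) *
          (((1 + ‖ξ - x‖) ^ N₀ * (Mh * ((B / 2) ^ (∑ i, κ' i) *
              ∏ i, ((κ' i : ℝ) ^ (β * (κ' i : ℝ)))))) *
           ((1 + ‖x‖) ^ (-(N + N₀)) * (Mf * ((B / 2) ^ (∑ i, (κ i - κ' i)) *
              ∏ i, (((κ i - κ' i : ℕ) : ℝ) ^ (β * ((κ i - κ' i : ℕ) : ℝ)))))))) := by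
      refine mul_le_mul_of_nonneg_left (mul_le_mul_of_nonneg_left ?_ (Nat.cast_nonneg _))
        (Real.rpow_nonneg hxp.le _)
      exact mul_le_mul hb1 hb2 habs2 (by positivity)
    refine hstep.trans ?_
    have hab : (∑ i, κ' i) + (∑ i, (κ i - κ' i)) = ∑ i, κ i := by
      rw [← Finset.sum_add_distrib]
      exact Finset.sum_congr rfl fun i _ => Nat.add_sub_cancel' (hle i)
    have hpow : (B / 2) ^ (∑ i, κ' i) * (B / 2) ^ (∑ i, (κ i - κ' i))
        = (B / 2) ^ (∑ i, κ i) := by rw [← pow_add, hab]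
    have hprod : ((∏ i', (κ i').choose (κ' i') : ℕ) : ℝ) *
        ((∏ i, ((κ' i : ℝ) ^ (β * (κ' i : ℝ)))) *
         (∏ i, (((κ i - κ' i : ℕ) : ℝ) ^ (β * ((κ i - κ' i : ℕ) : ℝ)))))
        = ∏ i, (((κ i).choose (κ' i) : ℝ) *
            ((κ' i : ℝ) ^ (β * (κ' i : ℝ)) *
             ((κ i - κ' i : ℕ) : ℝ) ^ (β * ((κ i - κ' i : ℕ) : ℝ)))) := by
      rw [Nat.cast_prod, ← Finset.prod_mul_distrib, ← Finset.prod_mul_distrib]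
    have hrearr : (1 + ‖x‖) ^ N * (((∏ i', (κ i').choose (κ' i') : ℕ) : ℝ) *
          (((1 + ‖ξ - x‖) ^ N₀ * (Mh * ((B / 2) ^ (∑ i, κ' i) *
              ∏ i, ((κ' i : ℝ) ^ (β * (κ' i : ℝ)))))) *
           ((1 + ‖x‖) ^ (-(N + N₀)) * (Mf * ((B / 2) ^ (∑ i, (κ i - κ' i)) *
              ∏ i, (((κ i - κ' i : ℕ) : ℝ) ^ (β * ((κ i - κ' i : ℕ) : ℝ))))))))
        = Mh * Mf * ((1 + ‖x‖) ^ N * (1 + ‖x‖) ^ (-(N + N₀)) * (1 + ‖ξ - x‖) ^ N₀) *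
            ((B / 2) ^ (∑ i, κ i) *
             ∏ i, (((κ i).choose (κ' i) : ℝ) *
               ((κ' i : ℝ) ^ (β * (κ' i : ℝ)) *
                ((κ i - κ' i : ℕ) : ℝ) ^ (β * ((κ i - κ' i : ℕ) : ℝ))))) := by
      rw [← hprod, ← hpow]; ring
    rw [hrearr]
    have hprod_nonneg : (0:ℝ) ≤ ∏ i, (((κ i).choose (κ' i) : ℝ) *
        ((κ' i : ℝ) ^ (β * (κ' i : ℝ)) *
         ((κ i - κ' i : ℕ) : ℝ) ^ (β * ((κ i - κ' i : ℕ) : ℝ)))) :=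
      Finset.prod_nonneg fun i _ => mul_nonneg (Nat.cast_nonneg _)
        (mul_nonneg (Real.rpow_nonneg (Nat.cast_nonneg _) _)
          (Real.rpow_nonneg (Nat.cast_nonneg _) _))
    refine mul_le_mul_of_nonneg_right ?_
      (mul_nonneg (pow_nonneg hB2.le _) hprod_nonneg)
    exact mul_le_mul_of_nonneg_left (weight_le hN₀ ξ x) (mul_nonneg hMh0 hMf0)
  -- assemble
  calc (1 + ‖x‖) ^ N * ‖pderivMulti d κ (fun y => h (ξ - y) * f₀ y) x‖
      ≤ (1 + ‖x‖) ^ N * ∑ κ' ∈ Fintype.piFinset (fun i' => Finset.range (κ i' + 1)),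
          ((∏ i', (κ i').choose (κ' i') : ℕ) : ℝ) *
            (‖pderivMulti d κ' h (ξ - x)‖ *
             ‖pderivMulti d (fun i' => κ i' - κ' i') f₀ x‖) :=
        mul_le_mul_of_nonneg_left htri (Real.rpow_nonneg hxp.le _)
    _ = ∑ κ' ∈ Fintype.piFinset (fun i' => Finset.range (κ i' + 1)),
          (1 + ‖x‖) ^ N * (((∏ i', (κ i').choose (κ' i') : ℕ) : ℝ) *
            (‖pderivMulti d κ' h (ξ - x)‖ *
             ‖pderivMulti d (fun i' => κ i' - κ' i') f₀ x‖)) := Finset.mul_sum _ _ _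
    _ ≤ ∑ κ' ∈ Fintype.piFinset (fun i' => Finset.range (κ i' + 1)),
          Mh * Mf * (1 + ‖ξ‖) ^ N₀ * ((B / 2) ^ (∑ i, κ i) *
            ∏ i, (((κ i).choose (κ' i) : ℝ) *
              ((κ' i : ℝ) ^ (β * (κ' i : ℝ)) *
               ((κ i - κ' i : ℕ) : ℝ) ^ (β * ((κ i - κ' i : ℕ) : ℝ))))) :=
        Finset.sum_le_sum hterm
    _ = Mh * Mf * (1 + ‖ξ‖) ^ N₀ * (B / 2) ^ (∑ i, κ i) *
          ∑ κ' ∈ Fintype.piFinset (fun i' => Finset.range (κ i' + 1)),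
            ∏ i, (((κ i).choose (κ' i) : ℝ) *
              ((κ' i : ℝ) ^ (β * (κ' i : ℝ)) *
               ((κ i - κ' i : ℕ) : ℝ) ^ (β * ((κ i - κ' i : ℕ) : ℝ)))) := by
        rw [Finset.mul_sum]
        exact Finset.sum_congr rfl fun κ' _ => by ring
    _ = Mh * Mf * (1 + ‖ξ‖) ^ N₀ * (B / 2) ^ (∑ i, κ i) *
          ∏ i, ∑ j ∈ Finset.range (κ i + 1), (((κ i).choose j : ℝ) *
            ((j : ℝ) ^ (β * (j : ℝ)) *
             ((κ i - j : ℕ) : ℝ) ^ (β * ((κ i - j : ℕ) : ℝ)))) := by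
        rw [Finset.prod_univ_sum]
    _ ≤ Mh * Mf * (1 + ‖ξ‖) ^ N₀ * (B / 2) ^ (∑ i, κ i) *
          ∏ i, ((2:ℝ) ^ (κ i) * (κ i : ℝ) ^ (β * (κ i : ℝ))) := by
        refine mul_le_mul_of_nonneg_left (Finset.prod_le_prod (fun i _ => ?_) (fun i _ =>
          sum_choose_rpow_le hβ (κ i))) (by positivity)
        exact Finset.sum_nonneg fun j _ => mul_nonneg (Nat.cast_nonneg _)
          (mul_nonneg (Real.rpow_nonneg (Nat.cast_nonneg _) _)
            (Real.rpow_nonneg (Nat.cast_nonneg _) _))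
    _ = Mh * Mf * (1 + ‖ξ‖) ^ N₀ * ((B ^ (∑ i, κ i)) *
          ∏ i, ((κ i : ℝ) ^ (β * (κ i : ℝ)))) := by
        rw [Finset.prod_mul_distrib, Finset.prod_pow_eq_pow_sum]
        have : (B / 2) ^ (∑ i, κ i) * (2:ℝ) ^ (∑ i, κ i) = B ^ (∑ i, κ i) := by
          rw [← mul_pow, div_mul_cancel₀]; norm_num
        rw [← this]; ring
end

section
/- For every β ≥ 0, every B > 0 and every multi-index κ ∈ ℕ^d, the Leibniz-type sum over multi-indices μ ≤ κ satisfies ∑_{μ ≤ κ} (∏_{i=1}^d C(κ_i, μ_i)) · B^{|μ|} μ^{βμ} · B^{|κ−μ|} (κ−μ)^{β(κ−μ)} ≤ (2B)^{|κ|} κ^{βκ}, where C(n,k) denotes the binomial coefficient and the convention 0^0 = 1 is used. (The combinatorial inequality underlying estimate (6.5).) -/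
/-!
Since `B^{|μ|} B^{|κ-μ|} = B^{|κ|}` and, coordinatewise, `a^{βa} b^{βb} ≤ (a+b)^{β(a+b)}`
(raise both bases to `a + b`), every summand is at most `∏ C(κ_i, μ_i) · B^{|κ|} κ^{βκ}`.
Summing the multinomial weights factorises over the coordinates into `∏ 2^{κ_i} = 2^{|κ|}`.
-/

open Finset

theorem Nat.sum_Iic_choose (n : ℕ) : ∑ k ∈ Iic n, n.choose k = 2 ^ n := by
  rw [← Nat.range_succ_eq_Iic, Nat.sum_range_choose]

theorem Finset.sum_Iic_prod_choose {ι : Type*} [Fintype ι] [DecidableEq ι] (κ : ι → ℕ) :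
    ∑ μ ∈ Iic κ, ∏ i, (κ i).choose (μ i) = 2 ^ ∑ i, κ i := by
  simp only [← prod_pow_eq_pow_sum, ← Nat.sum_Iic_choose, prod_univ_sum]
  -- `Iic κ` is by definition `piFinset fun i ↦ Iic (κ i)`.
  rfl

theorem Real.rpow_mul_self_mul_le_add {a b β : ℝ} (ha : 0 ≤ a) (hb : 0 ≤ b) (hβ : 0 ≤ β) :
    a ^ (β * a) * b ^ (β * b) ≤ (a + b) ^ (β * (a + b)) := by
  have hab : 0 ≤ a + b := add_nonneg ha hb
  calc a ^ (β * a) * b ^ (β * b) ≤ (a + b) ^ (β * a) * (a + b) ^ (β * b) := by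
        gcongr <;> linarith
    _ = (a + b) ^ (β * (a + b)) := by
        rw [mul_add, Real.rpow_add_of_nonneg hab (by positivity) (by positivity)]

theorem Finset.prod_rpow_mul_prod_rpow_sub_le {ι : Type*} [Fintype ι] {β : ℝ} (hβ : 0 ≤ β)
    {μ κ : ι → ℕ} (hμ : μ ≤ κ) :
    (∏ i, (μ i : ℝ) ^ (β * μ i)) * ∏ i, ((κ i - μ i : ℕ) : ℝ) ^ (β * (κ i - μ i : ℕ)) ≤
      ∏ i, (κ i : ℝ) ^ (β * κ i) := by
  rw [← prod_mul_distrib]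
  refine prod_le_prod (fun i _ => by positivity) fun i _ => ?_
  have key := Real.rpow_mul_self_mul_le_add (μ i).cast_nonneg (κ i - μ i).cast_nonneg hβ
  rwa [← Nat.cast_add, Nat.add_sub_cancel' (hμ i)] at key

theorem Finset.sum_add_sum_sub {ι : Type*} (s : Finset ι) {μ κ : ι → ℕ} (hμ : μ ≤ κ) :
    ∑ i ∈ s, μ i + ∑ i ∈ s, (κ i - μ i) = ∑ i ∈ s, κ i := by
  rw [← sum_add_distrib]
  exact sum_congr rfl fun i _ => Nat.add_sub_cancel' (hμ i)

theorem leibniz_multiindex_sum_le_general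
    (d : ℕ) (β B : ℝ) (hβ : 0 ≤ β) (hB : 0 < B) (κ : Fin d → ℕ) :
    ∑ μ ∈ Finset.Iic κ,
        ((∏ i, (κ i).choose (μ i) : ℕ) : ℝ) *
          (B ^ (∑ i, μ i) * ∏ i, ((μ i : ℝ) ^ (β * (μ i : ℝ)))) *
          (B ^ (∑ i, (κ i - μ i)) *
            ∏ i, (((κ i - μ i : ℕ) : ℝ) ^ (β * ((κ i - μ i : ℕ) : ℝ)))) ≤
      (2 * B) ^ (∑ i, κ i) * ∏ i, ((κ i : ℝ) ^ (β * (κ i : ℝ))) := by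
  set P : ℝ := ∏ i, (κ i : ℝ) ^ (β * κ i)
  have summand_le : ∀ μ ∈ Iic κ,
      ((∏ i, (κ i).choose (μ i) : ℕ) : ℝ) *
          (B ^ (∑ i, μ i) * ∏ i, (μ i : ℝ) ^ (β * μ i)) *
          (B ^ (∑ i, (κ i - μ i)) * ∏ i, ((κ i - μ i : ℕ) : ℝ) ^ (β * (κ i - μ i : ℕ))) ≤
        ((∏ i, (κ i).choose (μ i) : ℕ) : ℝ) * B ^ (∑ i, κ i) * P := by
    intro μ hμ
    rw [mem_Iic] at hμ
    calc _ = ((∏ i, (κ i).choose (μ i) : ℕ) : ℝ) * B ^ (∑ i, μ i + ∑ i, (κ i - μ i)) *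
            ((∏ i, (μ i : ℝ) ^ (β * μ i)) *
              ∏ i, ((κ i - μ i : ℕ) : ℝ) ^ (β * (κ i - μ i : ℕ))) := by ring
      _ ≤ _ := by
        rw [sum_add_sum_sub _ hμ]
        gcongr
        exact prod_rpow_mul_prod_rpow_sub_le hβ hμ
  calc _ ≤ ∑ μ ∈ Iic κ, ((∏ i, (κ i).choose (μ i) : ℕ) : ℝ) * B ^ (∑ i, κ i) * P :=
        sum_le_sum summand_le
    _ = (2 * B) ^ (∑ i, κ i) * P := by
        rw [← sum_mul, ← sum_mul, ← Nat.cast_sum, sum_Iic_prod_choose, mul_pow]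
        push_cast
        ring

theorem leibniz_multiindex_sum_le
    (d : ℕ) (hd : 1 ≤ d) (β B : ℝ) (hβ : 0 ≤ β) (hB : 0 < B) (κ : Fin d → ℕ) :
    ∑ μ ∈ Finset.Iic κ,
        ((∏ i, (κ i).choose (μ i) : ℕ) : ℝ) *
          (B ^ (∑ i, μ i) * ∏ i, ((μ i : ℝ) ^ (β * (μ i : ℝ)))) *
          (B ^ (∑ i, (κ i - μ i)) *
            ∏ i, (((κ i - μ i : ℕ) : ℝ) ^ (β * ((κ i - μ i : ℕ) : ℝ)))) ≤
      (2 * B) ^ (∑ i, κ i) * ∏ i, ((κ i : ℝ) ^ (β * (κ i : ℝ))) :=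
  leibniz_multiindex_sum_le_general d β B hβ hB κ
end

section
/- Let β > 0 and let u : 𝒮^β(ℝ^d) → ℂ be a linear functional. Suppose there are N > 0, B > 0, δ > 0 and N₀ ≥ 0 such that for every g ∈ 𝒮^β(ℝ^d) with ‖g‖_{N,B} ≤ δ one has (1+|s|)^{N₀+d+1} |u(t ↦ g(s−t))| ≤ 1 for all s ∈ ℝ^d. Let f₀ ∈ 𝒮^β(ℝ^d) and let h : ℝ^d → ℂ be smooth with ‖h‖_{−N₀, B'} < ∞ for every B' > 0. Then for every ξ ∈ ℝ^d the function t ↦ h(t) f₀(ξ−t) belongs to 𝒮^β(ℝ^d) and |u(t ↦ h(t) f₀(ξ−t))| ≤ δ^{−1} ‖h‖_{−N₀, B/2} ‖f₀‖_{N+N₀, B/2} (1+|ξ|)^{−d−1}; in particular the bound is integrable in ξ over ℝ^d. (Estimate (6.7), giving the absolute convergence of the extension integral (6.4) in the proof of Theorem 4.) -/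
/-!
STATEMENT 13 (estimate (6.7): absolute convergence of the extension
integral (6.4) in the proof of Theorem 4).
Let `u` be a linear functional on the Gel'fand–Shilov-type space `𝒮^β(ℝ^d)`.
Suppose there are `N > 0`, `B > 0`, `δ > 0`, `N₀ ≥ 0` such that every
`g ∈ 𝒮^β` with `‖g‖_{N,B} ≤ δ` satisfies
`(1+|s|)^{N₀+d+1} |u(t ↦ g(s−t))| ≤ 1` for all `s`. Let `f₀ ∈ 𝒮^β` and let `h`
be smooth with `‖h‖_{−N₀,B'} < ∞` for every `B' > 0`. Then
`t ↦ h(t) f₀(ξ−t)` belongs to `𝒮^β` and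
`|u(t ↦ h(t) f₀(ξ−t))| ≤ δ⁻¹ ‖h‖_{−N₀,B/2} ‖f₀‖_{N+N₀,B/2} (1+|ξ|)^{−d−1}`;
in particular the bound is integrable in `ξ` over `ℝ^d`.
-/

open scoped ENNReal

/-- The Gel'fand–Shilov-type space `𝒮^β(ℝ^d)`: smooth functions all of whose
norms `‖·‖_{N,B}` (`N > 0`, `B > 0`) are finite. -/
def gsSpace (d : ℕ) (β : ℝ) : Set (EuclideanSpace ℝ (Fin d) → ℂ) :=
  {f | ContDiff ℝ (⊤ : ℕ∞) f ∧ ∀ N B : ℝ, 0 < N → 0 < B → gsNorm d β N B f ≠ ⊤}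

namespace GSAux
open Finset
variable {d : ℕ}
local notation "E" => EuclideanSpace ℝ (Fin d)



lemma contDiff_pderivOne {f : E → ℂ} (hf : ContDiff ℝ (⊤ : ℕ∞) f) (i : Fin d) :
    ContDiff ℝ (⊤ : ℕ∞) (pderivOne d i f) := by
  have h1 : ContDiff ℝ (⊤ : ℕ∞) (fderiv ℝ f) := hf.fderiv_right (by simp)
  exact (ContinuousLinearMap.apply ℝ ℂ (EuclideanSpace.single i (1:ℝ))).contDiff.comp h1

lemma contDiff_iterate {f : E → ℂ} (hf : ContDiff ℝ (⊤ : ℕ∞) f) (i : Fin d) (n : ℕ) :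
    ContDiff ℝ (⊤ : ℕ∞) ((pderivOne d i)^[n] f) := by
  induction n with
  | zero => simpa using hf
  | succ n ih => rw [Function.iterate_succ_apply']; exact contDiff_pderivOne ih i

lemma pderivOne_smul (c : ℂ) {f : E → ℂ} (hf : ContDiff ℝ (⊤ : ℕ∞) f) (i : Fin d) :
    pderivOne d i (fun x => c * f x) = fun x => c * pderivOne d i f x := by
  funext x
  have hdf : DifferentiableAt ℝ f x := (hf.differentiable (by simp)) x
  simp only [pderivOne, fderiv_const_mul hdf c]
  simp

lemma iterate_smul (c : ℂ) {f : E → ℂ} (hf : ContDiff ℝ (⊤ : ℕ∞) f) (i : Fin d) (n : ℕ) :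
    (pderivOne d i)^[n] (fun x => c * f x) = fun x => c * (pderivOne d i)^[n] f x := by
  induction n with
  | zero => simp
  | succ n ih =>
    rw [Function.iterate_succ_apply', ih, pderivOne_smul c (contDiff_iterate hf i n) i]
    funext x
    rw [Function.iterate_succ_apply' (pderivOne d i) n f]

lemma pderivOne_sum {α : Type*} (s : Finset α) (F : α → E → ℂ)
    (hF : ∀ a ∈ s, ContDiff ℝ (⊤ : ℕ∞) (F a)) (i : Fin d) :
    pderivOne d i (fun x => ∑ a ∈ s, F a x) = fun x => ∑ a ∈ s, pderivOne d i (F a) x := by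
  funext x
  simp only [pderivOne]
  rw [fderiv_fun_sum (fun a ha => ((hF a ha).differentiable (by simp)) x)]
  simp

lemma iterate_sum {α : Type*} (s : Finset α) (F : α → E → ℂ)
    (hF : ∀ a ∈ s, ContDiff ℝ (⊤ : ℕ∞) (F a)) (i : Fin d) (n : ℕ) :
    (pderivOne d i)^[n] (fun x => ∑ a ∈ s, F a x)
      = fun x => ∑ a ∈ s, (pderivOne d i)^[n] (F a) x := by
  induction n with
  | zero => simp
  | succ n ih =>
    rw [Function.iterate_succ_apply', ih,
      pderivOne_sum s (fun a => (pderivOne d i)^[n] (F a))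
        (fun a ha => contDiff_iterate (hF a ha) i n) i]
    funext x
    exact Finset.sum_congr rfl fun a _ =>
      congrFun (Function.iterate_succ_apply' (pderivOne d i) n (F a)).symm x

lemma pderivOne_mul {f g : E → ℂ} (hf : ContDiff ℝ (⊤ : ℕ∞) f) (hg : ContDiff ℝ (⊤ : ℕ∞) g) (i : Fin d) :
    pderivOne d i (fun x => f x * g x)
      = fun x => pderivOne d i f x * g x + f x * pderivOne d i g x := by
  funext x
  have hdf : DifferentiableAt ℝ f x := (hf.differentiable (by simp)) x
  have hdg : DifferentiableAt ℝ g x := (hg.differentiable (by simp)) x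
  simp only [pderivOne]
  rw [fderiv_fun_mul hdf hdg]
  simp only [ContinuousLinearMap.add_apply, ContinuousLinearMap.smul_apply, smul_eq_mul]
  ring

open Finset

lemma pascal_sum (A B : ℕ → ℂ) (n : ℕ) :
    ∑ j ∈ Finset.range (n+2), ((n+1).choose j : ℂ) * (A j * B (n+1-j))
      = ∑ j ∈ Finset.range (n+1), (n.choose j : ℂ) * (A (j+1) * B (n-j)) +
        ∑ j ∈ Finset.range (n+1), (n.choose j : ℂ) * (A j * B (n+1-j)) := by
  have e1 : ∑ j ∈ Finset.range (n+2), ((n+1).choose j : ℂ) * (A j * B (n+1-j))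
      = (∑ j ∈ Finset.range (n+1), ((n+1).choose (j+1) : ℂ) * (A (j+1) * B (n-j)))
        + A 0 * B (n+1) := by
    rw [Finset.sum_range_succ' (fun j => ((n+1).choose j : ℂ) * (A j * B (n+1-j))) (n+1)]
    simp [Nat.succ_sub_succ]
  have e2 : ∀ j, ((n+1).choose (j+1) : ℂ) = (n.choose j : ℂ) + (n.choose (j+1) : ℂ) := by
    intro j
    rw [Nat.choose_succ_succ]
    push_cast
    ring
  have e3 : (∑ j ∈ Finset.range (n+1), ((n.choose (j+1) : ℂ)) * (A (j+1) * B (n-j)))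
        + A 0 * B (n+1)
      = ∑ j ∈ Finset.range (n+1), (n.choose j : ℂ) * (A j * B (n+1-j)) := by
    have e4 : ∑ j ∈ Finset.range (n+2), (n.choose j : ℂ) * (A j * B (n+1-j))
        = (∑ j ∈ Finset.range (n+1), ((n.choose (j+1) : ℂ)) * (A (j+1) * B (n-j)))
          + A 0 * B (n+1) := by
      rw [Finset.sum_range_succ' (fun j => (n.choose j : ℂ) * (A j * B (n+1-j))) (n+1)]
      simp [Nat.succ_sub_succ]
    have e5 : ∑ j ∈ Finset.range (n+2), (n.choose j : ℂ) * (A j * B (n+1-j))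
        = ∑ j ∈ Finset.range (n+1), (n.choose j : ℂ) * (A j * B (n+1-j)) := by
      rw [Finset.sum_range_succ]
      simp [Nat.choose_succ_self]
    rw [← e4, e5]
  have e6 : ∑ j ∈ Finset.range (n+1), ((n+1).choose (j+1) : ℂ) * (A (j+1) * B (n-j))
      = ∑ j ∈ Finset.range (n+1), (n.choose j : ℂ) * (A (j+1) * B (n-j)) +
        ∑ j ∈ Finset.range (n+1), (n.choose (j+1) : ℂ) * (A (j+1) * B (n-j)) := by
    rw [← Finset.sum_add_distrib]
    apply Finset.sum_congr rfl
    intro j _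
    rw [e2]
    ring
  rw [e1, e6, add_assoc, e3]


lemma iterate_leibniz {f g : E → ℂ} (hf : ContDiff ℝ (⊤ : ℕ∞) f) (hg : ContDiff ℝ (⊤ : ℕ∞) g)
    (i : Fin d) (n : ℕ) :
    (pderivOne d i)^[n] (fun x => f x * g x) =
      fun x => ∑ j ∈ Finset.range (n+1),
        (n.choose j : ℂ) * ((pderivOne d i)^[j] f x * (pderivOne d i)^[n-j] g x) := by
  induction n with
  | zero => simp
  | succ n ih =>
    rw [Function.iterate_succ_apply' (pderivOne d i) n, ih]
    have hterm : ∀ j, ContDiff ℝ (⊤ : ℕ∞) (fun x =>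
        (n.choose j : ℂ) * ((pderivOne d i)^[j] f x * (pderivOne d i)^[n-j] g x)) :=
      fun j => contDiff_const.mul ((contDiff_iterate hf i j).mul (contDiff_iterate hg i (n-j)))
    rw [pderivOne_sum (Finset.range (n+1)) _ (fun j _ => hterm j) i]
    funext x
    have hder : ∀ j ∈ Finset.range (n+1),
        pderivOne d i (fun x =>
          (n.choose j : ℂ) * ((pderivOne d i)^[j] f x * (pderivOne d i)^[n-j] g x)) x
        = (n.choose j : ℂ) * ((pderivOne d i)^[j+1] f x * (pderivOne d i)^[n-j] g x)
          + (n.choose j : ℂ) * ((pderivOne d i)^[j] f x * (pderivOne d i)^[n-j+1] g x) := by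
      intro j _
      rw [pderivOne_smul ((n.choose j : ℂ))
        ((contDiff_iterate hf i j).mul (contDiff_iterate hg i (n-j))) i]
      rw [pderivOne_mul (contDiff_iterate hf i j) (contDiff_iterate hg i (n-j)) i]
      rw [Function.iterate_succ_apply' (pderivOne d i) j f,
        Function.iterate_succ_apply' (pderivOne d i) (n-j) g]
      ring
    rw [Finset.sum_congr rfl hder, Finset.sum_add_distrib]
    rw [pascal_sum (fun j => (pderivOne d i)^[j] f x) (fun k => (pderivOne d i)^[k] g x) n]
    congr 1
    apply Finset.sum_congr rfl
    intro j hj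
    have : n - j + 1 = n + 1 - j := by
      have := Finset.mem_range.mp hj; omega
    rw [this]

noncomputable def pfold (l : List (Fin d)) (κ : Fin d → ℕ) (f : E → ℂ) : E → ℂ :=
  l.foldr (fun i g => (pderivOne d i)^[κ i] g) f

lemma pderivMulti_eq_pfold (κ : Fin d → ℕ) (f : E → ℂ) :
    pderivMulti d κ f = pfold (List.finRange d) κ f := rfl

lemma pfold_nil (κ : Fin d → ℕ) (f : E → ℂ) : pfold [] κ f = f := rfl

lemma pfold_cons (i : Fin d) (l : List (Fin d)) (κ : Fin d → ℕ) (f : E → ℂ) :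
    pfold (i :: l) κ f = (pderivOne d i)^[κ i] (pfold l κ f) := rfl

lemma pfold_contDiff (l : List (Fin d)) (κ : Fin d → ℕ) {f : E → ℂ} (hf : ContDiff ℝ (⊤ : ℕ∞) f) :
    ContDiff ℝ (⊤ : ℕ∞) (pfold l κ f) := by
  induction l with
  | nil => exact hf
  | cons i l ih => rw [pfold_cons]; exact contDiff_iterate ih i (κ i)

lemma pfold_congr (l : List (Fin d)) {κ₁ κ₂ : Fin d → ℕ}
    (hagree : ∀ j ∈ l, κ₁ j = κ₂ j) (f : E → ℂ) : pfold l κ₁ f = pfold l κ₂ f := by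
  induction l with
  | nil => rfl
  | cons i l ih =>
    rw [pfold_cons, pfold_cons, ih (fun j hj => hagree j (List.mem_cons_of_mem i hj)),
      hagree i List.mem_cons_self]

def maskv (l : List (Fin d)) (κ : Fin d → ℕ) : Fin d → ℕ := fun j => if j ∈ l then κ j else 0

lemma pfold_leibniz (l : List (Fin d)) (hl : l.Nodup) (κ : Fin d → ℕ) {f g : E → ℂ}
    (hf : ContDiff ℝ (⊤ : ℕ∞) f) (hg : ContDiff ℝ (⊤ : ℕ∞) g) :
    pfold l κ (fun x => f x * g x) =
      fun x => ∑ ν ∈ Fintype.piFinset (fun j => Finset.range (maskv l κ j + 1)),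
        ((∏ j, (maskv l κ j).choose (ν j) : ℕ) : ℂ) *
          (pfold l ν f x * pfold l (fun j => maskv l κ j - ν j) g x) := by
  induction l with
  | nil =>
    funext x
    have h0 : (fun _ => 0) ∈ Fintype.piFinset
        (fun j : Fin d => Finset.range (maskv [] κ j + 1)) := by
      simp [Fintype.mem_piFinset, maskv]
    rw [Finset.sum_eq_single_of_mem _ h0]
    · simp [pfold, maskv]
    · intro μ hμ hne
      exfalso; apply hne; funext j
      have := Fintype.mem_piFinset.mp hμ j
      simp [maskv] at this
      simp [this]
  | cons i L ih =>
    have hiL : i ∉ L := (List.nodup_cons.mp hl).1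
    have hLnd : L.Nodup := (List.nodup_cons.mp hl).2
    have hm'_eq : ∀ j', j' ≠ i → maskv (i :: L) κ j' = maskv L κ j' := by
      intro j' hne; simp [maskv, List.mem_cons, hne]
    have hm'_i : maskv (i :: L) κ i = κ i := by simp [maskv]
    have hm_i : maskv L κ i = 0 := by simp [maskv, hiL]
    -- abbreviations
    set m := maskv L κ with hm
    set m' := maskv (i :: L) κ with hm'def
    have hFsm : ∀ ν : Fin d → ℕ, ContDiff ℝ (⊤ : ℕ∞) (pfold L ν f) := fun ν => pfold_contDiff L ν hf
    have hGsm : ∀ ν : Fin d → ℕ, ContDiff ℝ (⊤ : ℕ∞) (pfold L ν g) := fun ν => pfold_contDiff L ν hg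
    -- (Ti)
    have hTi : ∀ (μ : Fin d → ℕ) (j : ℕ),
        pfold (i :: L) (Function.update μ i j) f = (pderivOne d i)^[j] (pfold L μ f) := by
      intro μ j
      rw [pfold_cons, Function.update_self,
        pfold_congr L (κ₁ := Function.update μ i j) (κ₂ := μ)
          (fun j' hj' => Function.update_of_ne (ne_of_mem_of_not_mem hj' hiL) j μ) f]
    -- (Tii)
    have hTii : ∀ (μ : Fin d → ℕ) (j : ℕ),
        pfold (i :: L) (fun j' => m' j' - Function.update μ i j j') g
          = (pderivOne d i)^[κ i - j] (pfold L (fun j' => m j' - μ j') g) := by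
      intro μ j
      rw [pfold_cons]
      have h1 : m' i - Function.update μ i j i = κ i - j := by
        rw [Function.update_self, hm'_i]
      rw [h1, pfold_congr L (κ₁ := fun j' => m' j' - Function.update μ i j j')
        (κ₂ := fun j' => m j' - μ j')
        (fun j' hj' => by
          have hne : j' ≠ i := ne_of_mem_of_not_mem hj' hiL
          show m' j' - Function.update μ i j j' = m j' - μ j'
          rw [hm'_eq j' hne, Function.update_of_ne hne]) g]
    -- (Tiii)
    have hTiii : ∀ (μ : Fin d → ℕ) (j : ℕ),
        μ ∈ Fintype.piFinset (fun j' => Finset.range (m j' + 1)) →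
        (∏ j', (m' j').choose (Function.update μ i j j'))
          = (κ i).choose j * ∏ j', (m j').choose (μ j') := by
      intro μ j hμ
      have hμi : μ i = 0 := by
        have := Fintype.mem_piFinset.mp hμ i
        rw [hm_i] at this
        simpa using this
      rw [← Finset.mul_prod_erase Finset.univ
          (fun j' => (m' j').choose (Function.update μ i j j')) (Finset.mem_univ i),
        ← Finset.mul_prod_erase Finset.univ
          (fun j' => (m j').choose (μ j')) (Finset.mem_univ i)]
      rw [Function.update_self, hm'_i, hm_i, hμi]
      simp only [Nat.choose_self, Nat.choose_zero_right, one_mul]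
      congr 1
      apply Finset.prod_congr rfl
      intro j' hj'
      have hne : j' ≠ i := Finset.ne_of_mem_erase hj'
      rw [hm'_eq j' hne, Function.update_of_ne hne]
    -- start
    rw [pfold_cons, ih hLnd]
    have hterm : ∀ ν : Fin d → ℕ, ContDiff ℝ (⊤ : ℕ∞) (fun x =>
        ((∏ j, (m j).choose (ν j) : ℕ) : ℂ) *
          (pfold L ν f x * pfold L (fun j => m j - ν j) g x)) :=
      fun ν => contDiff_const.mul ((hFsm ν).mul (hGsm _))
    rw [iterate_sum _ _ (fun ν _ => hterm ν) i (κ i)]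
    funext x
    have hsummand : ∀ μ ∈ Fintype.piFinset (fun j' => Finset.range (m j' + 1)),
        (pderivOne d i)^[κ i] (fun x =>
          ((∏ j, (m j).choose (μ j) : ℕ) : ℂ) *
            (pfold L μ f x * pfold L (fun j => m j - μ j) g x)) x
        = ∑ j ∈ Finset.range (κ i + 1),
            ((∏ j', (m' j').choose (Function.update μ i j j') : ℕ) : ℂ) *
              (pfold (i :: L) (Function.update μ i j) f x *
               pfold (i :: L) (fun j' => m' j' - Function.update μ i j j') g x) := by
      intro μ hμ
      rw [iterate_smul _ ((hFsm μ).mul (hGsm _)) i (κ i),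
        iterate_leibniz (hFsm μ) (hGsm _) i (κ i)]
      dsimp only
      rw [Finset.mul_sum]
      apply Finset.sum_congr rfl
      intro j _
      rw [hTi μ j, hTii μ j, hTiii μ j hμ]
      push_cast
      ring
    rw [Finset.sum_congr rfl hsummand, ← Finset.sum_product']
    apply Finset.sum_nbij' (i := fun p : (Fin d → ℕ) × ℕ => Function.update p.1 i p.2)
      (j := fun ν => (Function.update ν i 0, ν i))
    · intro p hp
      have hp1 := (Finset.mem_product.mp hp).1
      have hp2 := (Finset.mem_product.mp hp).2
      rw [Fintype.mem_piFinset]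
      intro a
      rcases eq_or_ne a i with rfl | hne
      · rw [Function.update_self, hm'_i]; exact hp2
      · rw [Function.update_of_ne hne, hm'_eq a hne]
        exact Fintype.mem_piFinset.mp hp1 a
    · intro ν hν
      rw [Finset.mem_product]
      constructor
      · rw [Fintype.mem_piFinset]
        intro a
        dsimp only
        rcases eq_or_ne a i with rfl | hne
        · rw [Function.update_self, hm_i]; simp
        · rw [Function.update_of_ne hne, ← hm'_eq a hne]
          exact Fintype.mem_piFinset.mp hν a
      · dsimp only
        have := Fintype.mem_piFinset.mp hν i
        rwa [hm'_i] at this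
    · intro p hp
      have hp1 := (Finset.mem_product.mp hp).1
      have hμi : p.1 i = 0 := by
        have := Fintype.mem_piFinset.mp hp1 i
        rw [hm_i] at this
        simpa using this
      ext1
      · simp [Function.update_idem, ← hμi, Function.update_eq_self]
      · simp
    · intro ν hν
      simp [Function.update_idem, Function.update_eq_self]
    · intro p hp
      rfl

lemma contDiff_refl_comp {φ : E → ℂ} (hφ : ContDiff ℝ (⊤ : ℕ∞) φ) (ξ : E) :
    ContDiff ℝ (⊤ : ℕ∞) (fun x => φ (ξ - x)) :=
  hφ.comp (contDiff_const.sub contDiff_id)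

lemma pderivOne_refl (i : Fin d) {φ : E → ℂ} (hφ : ContDiff ℝ (⊤ : ℕ∞) φ) (ξ : E) :
    pderivOne d i (fun x => φ (ξ - x)) = fun x => -(pderivOne d i φ (ξ - x)) := by
  funext x
  have href : HasFDerivAt (fun y : E => ξ - y) (-(ContinuousLinearMap.id ℝ E)) x :=
    (hasFDerivAt_id x).const_sub ξ
  have hφd : HasFDerivAt φ (fderiv ℝ φ (ξ - x)) (ξ - x) :=
    ((hφ.differentiable (by simp)) (ξ - x)).hasFDerivAt
  have hcomp : HasFDerivAt (fun y : E => φ (ξ - y))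
      ((fderiv ℝ φ (ξ - x)).comp (-(ContinuousLinearMap.id ℝ E))) x :=
    HasFDerivAt.comp x hφd href
  simp only [pderivOne]
  rw [hcomp.fderiv]
  simp

lemma iterate_refl (i : Fin d) {φ : E → ℂ} (hφ : ContDiff ℝ (⊤ : ℕ∞) φ) (ξ : E) (n : ℕ) :
    (pderivOne d i)^[n] (fun x => φ (ξ - x))
      = fun x => (-1 : ℂ)^n * (pderivOne d i)^[n] φ (ξ - x) := by
  induction n with
  | zero => simp
  | succ n ih =>
    rw [Function.iterate_succ_apply' (pderivOne d i) n, ih,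
      pderivOne_smul ((-1:ℂ)^n) (contDiff_refl_comp (contDiff_iterate hφ i n) ξ) i,
      pderivOne_refl i (contDiff_iterate hφ i n) ξ]
    funext x
    rw [Function.iterate_succ_apply' (pderivOne d i) n φ]
    ring

lemma pfold_refl (l : List (Fin d)) (κ : Fin d → ℕ) {φ : E → ℂ}
    (hφ : ContDiff ℝ (⊤ : ℕ∞) φ) (ξ : E) :
    pfold l κ (fun x => φ (ξ - x))
      = fun x => (-1 : ℂ)^((l.map κ).sum) * pfold l κ φ (ξ - x) := by
  induction l with
  | nil => funext x; simp [pfold_nil]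
  | cons i L ih =>
    rw [pfold_cons, ih,
      iterate_smul ((-1:ℂ)^((L.map κ).sum))
        (contDiff_refl_comp (pfold_contDiff L κ hφ) ξ) i (κ i),
      iterate_refl i (pfold_contDiff L κ hφ) ξ (κ i)]
    funext x
    rw [show pfold (i :: L) κ φ = (pderivOne d i)^[κ i] (pfold L κ φ) from rfl]
    simp only [List.map_cons, List.sum_cons]
    rw [pow_add]
    ring

lemma abs_pfold_refl (l : List (Fin d)) (κ : Fin d → ℕ) {φ : E → ℂ}
    (hφ : ContDiff ℝ (⊤ : ℕ∞) φ) (ξ x : E) :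
    ‖pfold l κ (fun y => φ (ξ - y)) x‖ = ‖pfold l κ φ (ξ - x)‖ := by
  rw [pfold_refl l κ hφ ξ]
  simp [map_mul, map_pow]

lemma pfold_smul (l : List (Fin d)) (κ : Fin d → ℕ) (c : ℂ) {f : E → ℂ}
    (hf : ContDiff ℝ (⊤ : ℕ∞) f) :
    pfold l κ (fun x => c * f x) = fun x => c * pfold l κ f x := by
  induction l with
  | nil => rfl
  | cons i L ih =>
    rw [pfold_cons, ih, iterate_smul c (pfold_contDiff L κ hf) i (κ i), pfold_cons]

lemma maskv_finRange (κ : Fin d → ℕ) : maskv (List.finRange d) κ = κ := by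
  funext j; simp [maskv, List.mem_finRange]

lemma rpow_self_pos {β : ℝ} (n : ℕ) : 0 < (n : ℝ) ^ (β * (n : ℝ)) := by
  rcases Nat.eq_zero_or_pos n with rfl | hn
  · norm_num
  · exact Real.rpow_pos_of_pos (by exact_mod_cast hn) _

lemma denom_pos {β B : ℝ} (hB : 0 < B) (κ : Fin d → ℕ) :
    0 < B ^ (∑ i, κ i) * ∏ i, ((κ i : ℝ) ^ (β * (κ i : ℝ))) :=
  mul_pos (pow_pos hB _) (Finset.prod_pos fun i _ => rpow_self_pos _)

lemma le_gsNorm (β N B : ℝ) (f : E → ℂ) (x : E) (κ : Fin d → ℕ) :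
    ENNReal.ofReal ((1 + ‖x‖) ^ N * ‖pderivMulti d κ f x‖ /
      (B ^ (∑ i, κ i) * ∏ i, ((κ i : ℝ) ^ (β * (κ i : ℝ))))) ≤ gsNorm d β N B f := by
  exact le_iSup₂ (f := fun x κ => ENNReal.ofReal ((1 + ‖x‖) ^ N *
    ‖pderivMulti d κ f x‖ /
      (B ^ (∑ i, κ i) * ∏ i, ((κ i : ℝ) ^ (β * (κ i : ℝ)))))) x κ

lemma gsNorm_bound {β N B : ℝ} (hB : 0 < B) {f : E → ℂ}
    (hfin : gsNorm d β N B f ≠ ⊤) (x : E) (κ : Fin d → ℕ) :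
    (1 + ‖x‖) ^ N * ‖pderivMulti d κ f x‖ ≤
      (gsNorm d β N B f).toReal *
        (B ^ (∑ i, κ i) * ∏ i, ((κ i : ℝ) ^ (β * (κ i : ℝ)))) := by
  have hpos := denom_pos (β := β) hB κ
  have h1 := le_gsNorm (d := d) β N B f x κ
  have h2 : (1 + ‖x‖) ^ N * ‖pderivMulti d κ f x‖ /
      (B ^ (∑ i, κ i) * ∏ i, ((κ i : ℝ) ^ (β * (κ i : ℝ)))) ≤ (gsNorm d β N B f).toReal := by
    have h0 : 0 ≤ (1 + ‖x‖) ^ N * ‖pderivMulti d κ f x‖ /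
        (B ^ (∑ i, κ i) * ∏ i, ((κ i : ℝ) ^ (β * (κ i : ℝ)))) := by positivity
    calc (1 + ‖x‖) ^ N * ‖pderivMulti d κ f x‖ /
        (B ^ (∑ i, κ i) * ∏ i, ((κ i : ℝ) ^ (β * (κ i : ℝ))))
        = (ENNReal.ofReal ((1 + ‖x‖) ^ N * ‖pderivMulti d κ f x‖ /
            (B ^ (∑ i, κ i) * ∏ i, ((κ i : ℝ) ^ (β * (κ i : ℝ)))))).toReal := by
          rw [ENNReal.toReal_ofReal h0]
      _ ≤ (gsNorm d β N B f).toReal := ENNReal.toReal_mono hfin h1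
  calc (1 + ‖x‖) ^ N * ‖pderivMulti d κ f x‖
      = ((1 + ‖x‖) ^ N * ‖pderivMulti d κ f x‖ /
        (B ^ (∑ i, κ i) * ∏ i, ((κ i : ℝ) ^ (β * (κ i : ℝ))))) *
        (B ^ (∑ i, κ i) * ∏ i, ((κ i : ℝ) ^ (β * (κ i : ℝ)))) := by
        rw [div_mul_cancel₀ _ hpos.ne']
    _ ≤ _ := by
        apply mul_le_mul_of_nonneg_right h2 (le_of_lt hpos)

lemma gsNorm_le_of_bound {β N B C : ℝ} (hB : 0 < B) {f : E → ℂ}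
    (hb : ∀ (x : E) (κ : Fin d → ℕ),
      (1 + ‖x‖) ^ N * ‖pderivMulti d κ f x‖ ≤
        C * (B ^ (∑ i, κ i) * ∏ i, ((κ i : ℝ) ^ (β * (κ i : ℝ))))) :
    gsNorm d β N B f ≤ ENNReal.ofReal C := by
  apply iSup₂_le
  intro x κ
  apply ENNReal.ofReal_le_ofReal
  rw [div_le_iff₀ (denom_pos hB κ)]
  exact hb x κ

lemma choose_rpow_bound {β : ℝ} (hβ : 0 < β) {n j : ℕ} (hj : j ≤ n) :
    (j : ℝ) ^ (β * (j : ℝ)) * ((n - j : ℕ) : ℝ) ^ (β * ((n - j : ℕ) : ℝ))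
      ≤ (n : ℝ) ^ (β * (n : ℝ)) := by
  have key : ∀ k : ℕ, k ≤ n → (k : ℝ) ^ (β * (k : ℝ)) ≤ (n : ℝ) ^ (β * (k : ℝ)) := by
    intro k hk
    rcases Nat.eq_zero_or_pos k with rfl | hkpos
    · simp
    · apply Real.rpow_le_rpow (by positivity) (by exact_mod_cast hk) (by positivity)
  calc (j : ℝ) ^ (β * (j : ℝ)) * ((n - j : ℕ) : ℝ) ^ (β * ((n - j : ℕ) : ℝ))
      ≤ (n : ℝ) ^ (β * (j : ℝ)) * (n : ℝ) ^ (β * ((n - j : ℕ) : ℝ)) := by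
        apply mul_le_mul (key j hj) (key (n - j) (Nat.sub_le n j))
          (le_of_lt (rpow_self_pos _)) (by positivity)
    _ = (n : ℝ) ^ (β * (n : ℝ)) := by
        rcases Nat.eq_zero_or_pos n with rfl | hn
        · interval_cases j
          simp
        · rw [← Real.rpow_add (by exact_mod_cast hn)]
          congr 1
          have : ((n - j : ℕ) : ℝ) = (n : ℝ) - (j : ℝ) := by
            exact Nat.cast_sub hj
          rw [this]
          ring

lemma sum_choose_prod (κ : Fin d → ℕ) :
    ∑ ν ∈ Fintype.piFinset (fun j => Finset.range (κ j + 1)),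
      ∏ j, (κ j).choose (ν j) = 2 ^ (∑ j, κ j) := by
  rw [← Finset.prod_univ_sum]
  rw [← Finset.prod_pow_eq_pow_sum]
  apply Finset.prod_congr rfl
  intro j _
  exact Nat.sum_range_choose (κ j)

lemma one_add_weight_le {u v w : ℝ} (hv : 0 ≤ v) (hw : 0 ≤ w) (h : u ≤ v + w) (R : ℝ)
    (hR : 0 ≤ R) (hu : 0 ≤ u) : (1 + u) ^ R ≤ (1 + v) ^ R * (1 + w) ^ R := by
  rw [← Real.mul_rpow (by linarith) (by linarith)]
  apply Real.rpow_le_rpow (by linarith) (by nlinarith) hR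

lemma prod_bound {β : ℝ} (hβ : 0 < β) (κ ν : Fin d → ℕ) (hν : ∀ i, ν i ≤ κ i) :
    (∏ i, ((ν i : ℝ) ^ (β * (ν i : ℝ)))) *
      (∏ i, (((κ i - ν i : ℕ) : ℝ) ^ (β * ((κ i - ν i : ℕ) : ℝ))))
      ≤ ∏ i, ((κ i : ℝ) ^ (β * (κ i : ℝ))) := by
  rw [← Finset.prod_mul_distrib]
  apply Finset.prod_le_prod
  · intro i _
    exact mul_nonneg (Real.rpow_nonneg (by positivity) _) (Real.rpow_nonneg (by positivity) _)
  · intro i _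
    exact choose_rpow_bound hβ (hν i)

lemma gen_bound {β : ℝ} (hβ : 0 < β) {φ ψ : E → ℂ}
    (hφ : ContDiff ℝ (⊤ : ℕ∞) φ) (hψ : ContDiff ℝ (⊤ : ℕ∞) ψ)
    {Cφ Cψ P Q b : ℝ} (hb : 0 < b) (hCφ : 0 ≤ Cφ) (hCψ : 0 ≤ Cψ)
    (hφb : ∀ (x : E) (κ : Fin d → ℕ), (1 + ‖x‖) ^ P * ‖pderivMulti d κ φ x‖
      ≤ Cφ * (b ^ (∑ i, κ i) * ∏ i, ((κ i : ℝ) ^ (β * (κ i : ℝ)))))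
    (hψb : ∀ (x : E) (κ : Fin d → ℕ), (1 + ‖x‖) ^ Q * ‖pderivMulti d κ ψ x‖
      ≤ Cψ * (b ^ (∑ i, κ i) * ∏ i, ((κ i : ℝ) ^ (β * (κ i : ℝ)))))
    (ξ x : E) (κ : Fin d → ℕ) :
    ((1 + ‖x‖) ^ P * (1 + ‖ξ - x‖) ^ Q) *
        ‖pderivMulti d κ (fun y => φ y * ψ (ξ - y)) x‖
      ≤ (Cφ * Cψ) * ((2 * b) ^ (∑ i, κ i) * ∏ i, ((κ i : ℝ) ^ (β * (κ i : ℝ)))) := by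
  have hψr : ContDiff ℝ (⊤ : ℕ∞) (fun y : E => ψ (ξ - y)) := contDiff_refl_comp hψ ξ
  have hL := pfold_leibniz (List.finRange d) (List.nodup_finRange d) κ hφ hψr
  rw [maskv_finRange] at hL
  have hEq : pderivMulti d κ (fun y => φ y * ψ (ξ - y)) x
      = ∑ ν ∈ Fintype.piFinset (fun j => Finset.range (κ j + 1)),
          ((∏ j, (κ j).choose (ν j) : ℕ) : ℂ) *
            (pderivMulti d ν φ x *
              pfold (List.finRange d) (fun j => κ j - ν j) (fun y => ψ (ξ - y)) x) := by
    rw [pderivMulti_eq_pfold, hL]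
    rfl
  -- abs of sum
  have habs : ‖pderivMulti d κ (fun y => φ y * ψ (ξ - y)) x‖
      ≤ ∑ ν ∈ Fintype.piFinset (fun j => Finset.range (κ j + 1)),
          ((∏ j, (κ j).choose (ν j) : ℕ) : ℝ) *
            (‖pderivMulti d ν φ x‖ *
              ‖pderivMulti d (fun j => κ j - ν j) ψ (ξ - x)‖) := by
    rw [hEq]
    refine le_trans (norm_sum_le _ _) (le_of_eq (Finset.sum_congr rfl ?_))
    intro ν _
    rw [norm_mul, norm_mul, Complex.norm_natCast]
    rw [abs_pfold_refl (List.finRange d) (fun j => κ j - ν j) hψ ξ x]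
    rfl
  have hWpos : 0 < (1 + ‖x‖) ^ P * (1 + ‖ξ - x‖) ^ Q := by
    apply mul_pos <;> apply Real.rpow_pos_of_pos <;> positivity
  -- step 1 : per-term bound
  have step1 : ((1 + ‖x‖) ^ P * (1 + ‖ξ - x‖) ^ Q) *
      ‖pderivMulti d κ (fun y => φ y * ψ (ξ - y)) x‖
      ≤ ∑ ν ∈ Fintype.piFinset (fun j => Finset.range (κ j + 1)),
          ((∏ j, (κ j).choose (ν j) : ℕ) : ℝ) *
            ((Cφ * Cψ) * (b ^ (∑ i, κ i) *
              ((∏ i, ((ν i : ℝ) ^ (β * (ν i : ℝ)))) *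
               (∏ i, (((κ i - ν i : ℕ) : ℝ) ^ (β * ((κ i - ν i : ℕ) : ℝ))))))) := by
    refine le_trans (mul_le_mul_of_nonneg_left habs (le_of_lt hWpos)) ?_
    rw [Finset.mul_sum]
    apply Finset.sum_le_sum
    intro ν hν
    have hνκ : ∀ j, ν j ≤ κ j := fun j =>
      Nat.lt_succ_iff.mp (Finset.mem_range.mp (Fintype.mem_piFinset.mp hν j))
    have h1 := hφb x ν
    have h2 := hψb (ξ - x) (fun j => κ j - ν j)
    have hkey : ((1 + ‖x‖) ^ P * (1 + ‖ξ - x‖) ^ Q) *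
        (((∏ j, (κ j).choose (ν j) : ℕ) : ℝ) *
          (‖pderivMulti d ν φ x‖ *
            ‖pderivMulti d (fun j => κ j - ν j) ψ (ξ - x)‖))
        = ((∏ j, (κ j).choose (ν j) : ℕ) : ℝ) *
          (((1 + ‖x‖) ^ P * ‖pderivMulti d ν φ x‖) *
           ((1 + ‖ξ - x‖) ^ Q *
             ‖pderivMulti d (fun j => κ j - ν j) ψ (ξ - x)‖)) := by ring
    rw [hkey]
    apply mul_le_mul_of_nonneg_left _ (by positivity)
    refine le_trans (mul_le_mul h1 h2 (by positivity) (by positivity)) (le_of_eq ?_)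
    have hsum : (∑ i, ν i) + (∑ i, (κ i - ν i)) = ∑ i, κ i := by
      rw [← Finset.sum_add_distrib]
      apply Finset.sum_congr rfl
      intro i _
      exact Nat.add_sub_cancel' (hνκ i)
    calc (Cφ * (b ^ (∑ i, ν i) * ∏ i, ((ν i : ℝ) ^ (β * (ν i : ℝ))))) *
          (Cψ * (b ^ (∑ i, (κ i - ν i)) *
            ∏ i, (((κ i - ν i : ℕ) : ℝ) ^ (β * ((κ i - ν i : ℕ) : ℝ)))))
        = (Cφ * Cψ) * ((b ^ (∑ i, ν i) * b ^ (∑ i, (κ i - ν i))) *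
            ((∏ i, ((ν i : ℝ) ^ (β * (ν i : ℝ)))) *
             (∏ i, (((κ i - ν i : ℕ) : ℝ) ^ (β * ((κ i - ν i : ℕ) : ℝ)))))) := by ring
      _ = (Cφ * Cψ) * (b ^ (∑ i, κ i) *
            ((∏ i, ((ν i : ℝ) ^ (β * (ν i : ℝ)))) *
             (∏ i, (((κ i - ν i : ℕ) : ℝ) ^ (β * ((κ i - ν i : ℕ) : ℝ)))))) := by
          rw [← pow_add, hsum]
  -- step 2 : sum the bound
  refine le_trans step1 ?_
  have step2 : ∀ ν ∈ Fintype.piFinset (fun j => Finset.range (κ j + 1)),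
      ((∏ j, (κ j).choose (ν j) : ℕ) : ℝ) *
        ((Cφ * Cψ) * (b ^ (∑ i, κ i) *
          ((∏ i, ((ν i : ℝ) ^ (β * (ν i : ℝ)))) *
           (∏ i, (((κ i - ν i : ℕ) : ℝ) ^ (β * ((κ i - ν i : ℕ) : ℝ)))))))
      ≤ ((∏ j, (κ j).choose (ν j) : ℕ) : ℝ) *
        ((Cφ * Cψ) * (b ^ (∑ i, κ i) * ∏ i, ((κ i : ℝ) ^ (β * (κ i : ℝ))))) := by
    intro ν hν
    have hνκ : ∀ j, ν j ≤ κ j := fun j =>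
      Nat.lt_succ_iff.mp (Finset.mem_range.mp (Fintype.mem_piFinset.mp hν j))
    apply mul_le_mul_of_nonneg_left _ (by positivity)
    apply mul_le_mul_of_nonneg_left _ (by positivity)
    apply mul_le_mul_of_nonneg_left _ (by positivity)
    exact prod_bound hβ κ ν hνκ
  refine le_trans (Finset.sum_le_sum step2) (le_of_eq ?_)
  rw [← Finset.sum_mul]
  rw [← Nat.cast_sum _ _]
  rw [sum_choose_prod κ]
  rw [mul_pow]
  push_cast
  ring

lemma pfold_zeroidx (l : List (Fin d)) (f : E → ℂ) : pfold l (fun _ => 0) f = f := by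
  induction l with
  | nil => rfl
  | cons i L ih => rw [pfold_cons, ih]; simp

lemma eq_zero_of_gsNorm_zero {β M B' : ℝ} (hB' : 0 < B') {f : E → ℂ}
    (hfin : gsNorm d β M B' f ≠ ⊤) (h0 : (gsNorm d β M B' f).toReal = 0) (x : E) :
    f x = 0 := by
  have hb := gsNorm_bound hB' hfin x (fun _ => 0)
  rw [h0, zero_mul] at hb
  have hP : pderivMulti d (fun _ => 0) f = f := pfold_zeroidx (List.finRange d) f
  rw [hP] at hb
  have hw : 0 < (1 + ‖x‖) ^ M := Real.rpow_pos_of_pos (by positivity) _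
  have : ‖f x‖ ≤ 0 := by nlinarith [norm_nonneg (f x)]
  exact norm_eq_zero.mp (le_antisymm this (norm_nonneg (f x)))

lemma F_bound {β : ℝ} (hβ : 0 < β) {h f₀ : E → ℂ}
    (hh : ContDiff ℝ (⊤ : ℕ∞) h) (hf₀ : ContDiff ℝ (⊤ : ℕ∞) f₀)
    {N₀ : ℝ} (hN₀ : 0 ≤ N₀) (ξ : E) {N' B' : ℝ} (hN' : 0 < N') (hB' : 0 < B')
    (hhfin : gsNorm d β (-N₀) (B'/2) h ≠ ⊤) (hffin : gsNorm d β (N'+N₀) (B'/2) f₀ ≠ ⊤)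
    (x : E) (κ : Fin d → ℕ) :
    (1 + ‖x‖) ^ N' * ‖pderivMulti d κ (fun y => h y * f₀ (ξ - y)) x‖
      ≤ ((gsNorm d β (-N₀) (B'/2) h).toReal * (gsNorm d β (N'+N₀) (B'/2) f₀).toReal
          * (1 + ‖ξ‖) ^ (N'+N₀)) *
        (B' ^ (∑ i, κ i) * ∏ i, ((κ i : ℝ) ^ (β * (κ i : ℝ)))) := by
  have hgen := gen_bound hβ hh hf₀ (half_pos hB') ENNReal.toReal_nonneg ENNReal.toReal_nonneg
    (fun y κ' => gsNorm_bound (half_pos hB') hhfin y κ')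
    (fun y κ' => gsNorm_bound (half_pos hB') hffin y κ') ξ x κ
  rw [show 2 * (B' / 2) = B' by ring] at hgen
  have hxw : ‖x‖ ≤ ‖ξ‖ + ‖ξ - x‖ := by
    calc ‖x‖ = ‖ξ - (ξ - x)‖ := by rw [sub_sub_cancel]
      _ ≤ ‖ξ‖ + ‖ξ - x‖ := norm_sub_le _ _
  have hsplit : (1 + ‖x‖) ^ N' = (1 + ‖x‖) ^ (N'+N₀) * (1 + ‖x‖) ^ (-N₀) := by
    rw [← Real.rpow_add (by positivity)]
    congr 1
    ring
  have hw : (1 + ‖x‖) ^ (N'+N₀) ≤ (1 + ‖ξ‖) ^ (N'+N₀) * (1 + ‖ξ - x‖) ^ (N'+N₀) :=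
    one_add_weight_le (norm_nonneg _) (norm_nonneg _) hxw _ (by linarith) (norm_nonneg _)
  calc (1 + ‖x‖) ^ N' * ‖pderivMulti d κ (fun y => h y * f₀ (ξ - y)) x‖
      = (1 + ‖x‖) ^ (N'+N₀) *
        ((1 + ‖x‖) ^ (-N₀) * ‖pderivMulti d κ (fun y => h y * f₀ (ξ - y)) x‖) := by
        rw [hsplit]; ring
    _ ≤ ((1 + ‖ξ‖) ^ (N'+N₀) * (1 + ‖ξ - x‖) ^ (N'+N₀)) *
        ((1 + ‖x‖) ^ (-N₀) * ‖pderivMulti d κ (fun y => h y * f₀ (ξ - y)) x‖) := by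
        apply mul_le_mul_of_nonneg_right hw
        have := Real.rpow_pos_of_pos (show (0:ℝ) < 1 + ‖x‖ by positivity) (-N₀)
        positivity
    _ = (1 + ‖ξ‖) ^ (N'+N₀) * (((1 + ‖x‖) ^ (-N₀) * (1 + ‖ξ - x‖) ^ (N'+N₀)) *
        ‖pderivMulti d κ (fun y => h y * f₀ (ξ - y)) x‖) := by ring
    _ ≤ (1 + ‖ξ‖) ^ (N'+N₀) *
        ((gsNorm d β (-N₀) (B'/2) h).toReal * (gsNorm d β (N'+N₀) (B'/2) f₀).toReal *
          (B' ^ (∑ i, κ i) * ∏ i, ((κ i : ℝ) ^ (β * (κ i : ℝ))))) := by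
        apply mul_le_mul_of_nonneg_left hgen
        positivity
    _ = _ := by ring

lemma G_bound {β : ℝ} (hβ : 0 < β) {h f₀ : E → ℂ}
    (hh : ContDiff ℝ (⊤ : ℕ∞) h) (hf₀ : ContDiff ℝ (⊤ : ℕ∞) f₀)
    {N₀ : ℝ} (hN₀ : 0 ≤ N₀) (ξ : E) {N' B' : ℝ} (hN' : 0 < N') (hB' : 0 < B')
    (hhfin : gsNorm d β (-N₀) (B'/2) h ≠ ⊤) (hffin : gsNorm d β (N'+N₀) (B'/2) f₀ ≠ ⊤)
    (x : E) (κ : Fin d → ℕ) :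
    (1 + ‖x‖) ^ N' * ‖pderivMulti d κ (fun y => f₀ y * h (ξ - y)) x‖
      ≤ ((gsNorm d β (N'+N₀) (B'/2) f₀).toReal * (gsNorm d β (-N₀) (B'/2) h).toReal
          * (1 + ‖ξ‖) ^ N₀) *
        (B' ^ (∑ i, κ i) * ∏ i, ((κ i : ℝ) ^ (β * (κ i : ℝ)))) := by
  have hgen := gen_bound hβ hf₀ hh (half_pos hB') ENNReal.toReal_nonneg ENNReal.toReal_nonneg
    (fun y κ' => gsNorm_bound (half_pos hB') hffin y κ')
    (fun y κ' => gsNorm_bound (half_pos hB') hhfin y κ') ξ x κ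
  rw [show 2 * (B' / 2) = B' by ring] at hgen
  have hb1 : (0:ℝ) < 1 + ‖x‖ := by positivity
  have hb2 : (0:ℝ) < 1 + ‖ξ - x‖ := by positivity
  have hb3 : (0:ℝ) < 1 + ‖ξ‖ := by positivity
  have hkey : (1 + ‖x‖) ^ (-N₀) ≤ (1 + ‖ξ‖) ^ N₀ * (1 + ‖ξ - x‖) ^ (-N₀) := by
    have h1 : (1 + ‖ξ - x‖) ^ N₀ ≤ (1 + ‖ξ‖) ^ N₀ * (1 + ‖x‖) ^ N₀ :=
      one_add_weight_le (norm_nonneg _) (norm_nonneg _) (norm_sub_le ξ x) _ hN₀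
        (norm_nonneg _)
    rw [Real.rpow_neg hb1.le, Real.rpow_neg hb2.le]
    have ha : 0 < (1 + ‖x‖) ^ N₀ := Real.rpow_pos_of_pos hb1 _
    have hbb : 0 < (1 + ‖ξ - x‖) ^ N₀ := Real.rpow_pos_of_pos hb2 _
    rw [inv_le_iff_one_le_mul₀ ha]
    calc (1:ℝ) = (1 + ‖ξ - x‖) ^ N₀ * ((1 + ‖ξ - x‖) ^ N₀)⁻¹ := by field_simp
      _ ≤ ((1 + ‖ξ‖) ^ N₀ * (1 + ‖x‖) ^ N₀) * ((1 + ‖ξ - x‖) ^ N₀)⁻¹ := by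
          apply mul_le_mul_of_nonneg_right h1 (by positivity)
      _ = (1 + ‖ξ‖) ^ N₀ * ((1 + ‖ξ - x‖) ^ N₀)⁻¹ * (1 + ‖x‖) ^ N₀ := by ring
  have hsplit : (1 + ‖x‖) ^ N' = (1 + ‖x‖) ^ (N'+N₀) * (1 + ‖x‖) ^ (-N₀) := by
    rw [← Real.rpow_add hb1]
    congr 1
    ring
  calc (1 + ‖x‖) ^ N' * ‖pderivMulti d κ (fun y => f₀ y * h (ξ - y)) x‖
      = (1 + ‖x‖) ^ (-N₀) * ((1 + ‖x‖) ^ (N'+N₀) *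
          ‖pderivMulti d κ (fun y => f₀ y * h (ξ - y)) x‖) := by
        rw [hsplit]; ring
    _ ≤ ((1 + ‖ξ‖) ^ N₀ * (1 + ‖ξ - x‖) ^ (-N₀)) * ((1 + ‖x‖) ^ (N'+N₀) *
          ‖pderivMulti d κ (fun y => f₀ y * h (ξ - y)) x‖) := by
        apply mul_le_mul_of_nonneg_right hkey
        have := Real.rpow_pos_of_pos hb1 (N'+N₀)
        positivity
    _ = (1 + ‖ξ‖) ^ N₀ * (((1 + ‖x‖) ^ (N'+N₀) * (1 + ‖ξ - x‖) ^ (-N₀)) *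
          ‖pderivMulti d κ (fun y => f₀ y * h (ξ - y)) x‖) := by ring
    _ ≤ (1 + ‖ξ‖) ^ N₀ *
        ((gsNorm d β (N'+N₀) (B'/2) f₀).toReal * (gsNorm d β (-N₀) (B'/2) h).toReal *
          (B' ^ (∑ i, κ i) * ∏ i, ((κ i : ℝ) ^ (β * (κ i : ℝ))))) := by
        apply mul_le_mul_of_nonneg_left hgen
        positivity
    _ = _ := by ring

end GSAux
theorem extension_integral_estimate
    (d : ℕ) (hd : 1 ≤ d) (β : ℝ) (hβ : 0 < β)
    -- a linear functional on 𝒮^β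
    (u : (EuclideanSpace ℝ (Fin d) → ℂ) → ℂ)
    (hu_add : ∀ f g, f ∈ gsSpace d β → g ∈ gsSpace d β → u (f + g) = u f + u g)
    (hu_smul : ∀ (c : ℂ) (f), f ∈ gsSpace d β → u (c • f) = c * u f)
    (N B δ N₀ : ℝ) (hN : 0 < N) (hB : 0 < B) (hδ : 0 < δ) (hN₀ : 0 ≤ N₀)
    -- the boundedness hypothesis on u
    (hu : ∀ g ∈ gsSpace d β, gsNorm d β N B g ≤ ENNReal.ofReal δ →
      ∀ s : EuclideanSpace ℝ (Fin d),
        (1 + ‖s‖) ^ (N₀ + (d : ℝ) + 1) * ‖(u fun t => g (s - t))‖ ≤ 1)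
    (f₀ : EuclideanSpace ℝ (Fin d) → ℂ) (hf₀ : f₀ ∈ gsSpace d β)
    (h : EuclideanSpace ℝ (Fin d) → ℂ) (hh : ContDiff ℝ (⊤ : ℕ∞) h)
    (hhn : ∀ B' : ℝ, 0 < B' → gsNorm d β (-N₀) B' h ≠ ⊤)
    (ξ : EuclideanSpace ℝ (Fin d)) :
    (fun t => h t * f₀ (ξ - t)) ∈ gsSpace d β ∧
    ENNReal.ofReal (‖(u fun t => h t * f₀ (ξ - t))‖) ≤
      ENNReal.ofReal (δ⁻¹ * (1 + ‖ξ‖) ^ (-(d : ℝ) - 1)) *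
        (gsNorm d β (-N₀) (B / 2) h * gsNorm d β (N + N₀) (B / 2) f₀) ∧
    MeasureTheory.Integrable (fun ζ : EuclideanSpace ℝ (Fin d) =>
      δ⁻¹ * (1 + ‖ζ‖) ^ (-(d : ℝ) - 1) *
        ((gsNorm d β (-N₀) (B / 2) h).toReal *
          (gsNorm d β (N + N₀) (B / 2) f₀).toReal)) := by
  classical
  obtain ⟨hf₀sm, hf₀n⟩ := hf₀
  have hBhalf : (0:ℝ) < B / 2 := by linarith
  have hhfinB : gsNorm d β (-N₀) (B/2) h ≠ ⊤ := hhn (B/2) hBhalf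
  have hffinB : gsNorm d β (N+N₀) (B/2) f₀ ≠ ⊤ := hf₀n (N+N₀) (B/2) (by linarith) hBhalf
  have hCh0 : 0 ≤ (gsNorm d β (-N₀) (B/2) h).toReal := ENNReal.toReal_nonneg
  have hCf0 : 0 ≤ (gsNorm d β (N+N₀) (B/2) f₀).toReal := ENNReal.toReal_nonneg
  have hξpos : (0:ℝ) < 1 + ‖ξ‖ := by positivity
  -- membership of F
  have hFsm : ContDiff ℝ (⊤ : ℕ∞) (fun t => h t * f₀ (ξ - t)) :=
    hh.mul (GSAux.contDiff_refl_comp hf₀sm ξ)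
  have hFmem : (fun t => h t * f₀ (ξ - t)) ∈ gsSpace d β := by
    refine ⟨hFsm, fun N' B' hN' hB' => ?_⟩
    have hb := fun x κ => GSAux.F_bound hβ hh hf₀sm hN₀ ξ hN' hB'
      (hhn (B'/2) (by linarith)) (hf₀n (N'+N₀) (B'/2) (by linarith) (by linarith)) x κ
    exact (lt_of_le_of_lt (GSAux.gsNorm_le_of_bound hB' hb) ENNReal.ofReal_lt_top).ne
  refine ⟨hFmem, ?_, ?_⟩
  · -- the main estimate
    by_cases hD0 : (gsNorm d β (N+N₀) (B/2) f₀).toReal * (gsNorm d β (-N₀) (B/2) h).toReal = 0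
    · -- degenerate case : h ≡ 0 or f₀ ≡ 0
      have hzero : ∀ t, h t * f₀ (ξ - t) = 0 := by
        rcases mul_eq_zero.mp hD0 with h0 | h0
        · intro t; rw [GSAux.eq_zero_of_gsNorm_zero hBhalf hffinB h0 (ξ - t), mul_zero]
        · intro t; rw [GSAux.eq_zero_of_gsNorm_zero hBhalf hhfinB h0 t, zero_mul]
      have hFfun : (fun t : EuclideanSpace ℝ (Fin d) => h t * f₀ (ξ - t))
          = (0:ℂ) • (fun t => h t * f₀ (ξ - t)) := by
        funext t
        simp [hzero t]
      have hu0 : u (fun t => h t * f₀ (ξ - t)) = 0 := by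
        conv_lhs => rw [hFfun]
        rw [hu_smul 0 _ hFmem, zero_mul]
      rw [hu0]
      simp
    · -- nondegenerate case
      obtain ⟨hCfne, hChne⟩ := mul_ne_zero_iff.mp hD0
      have hCfpos : 0 < (gsNorm d β (N+N₀) (B/2) f₀).toReal := lt_of_le_of_ne hCf0 (Ne.symm hCfne)
      have hChpos : 0 < (gsNorm d β (-N₀) (B/2) h).toReal := lt_of_le_of_ne hCh0 (Ne.symm hChne)
      have hWpos : (0:ℝ) < (1 + ‖ξ‖) ^ N₀ := Real.rpow_pos_of_pos hξpos _
      have hDpos : (0:ℝ) < (gsNorm d β (N+N₀) (B/2) f₀).toReal *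
          (gsNorm d β (-N₀) (B/2) h).toReal * (1 + ‖ξ‖) ^ N₀ := by positivity
      set c : ℝ := δ / ((gsNorm d β (N+N₀) (B/2) f₀).toReal *
          (gsNorm d β (-N₀) (B/2) h).toReal * (1 + ‖ξ‖) ^ N₀) with hcdef
      have hcpos : 0 < c := div_pos hδ hDpos
      have hGsm : ContDiff ℝ (⊤ : ℕ∞) (fun y : EuclideanSpace ℝ (Fin d) => f₀ y * h (ξ - y)) :=
        hf₀sm.mul (GSAux.contDiff_refl_comp hh ξ)
      have hg'sm : ContDiff ℝ (⊤ : ℕ∞) (fun y : EuclideanSpace ℝ (Fin d) =>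
          (c:ℂ) * (f₀ y * h (ξ - y))) := contDiff_const.mul hGsm
      have hg'der : ∀ (κ : Fin d → ℕ) (x : EuclideanSpace ℝ (Fin d)),
          ‖pderivMulti d κ (fun y => (c:ℂ) * (f₀ y * h (ξ - y))) x‖
          = c * ‖pderivMulti d κ (fun y => f₀ y * h (ξ - y)) x‖ := by
        intro κ x
        have he : pderivMulti d κ (fun y => (c:ℂ) * (f₀ y * h (ξ - y)))
            = fun x => (c:ℂ) * pderivMulti d κ (fun y => f₀ y * h (ξ - y)) x := by
          rw [GSAux.pderivMulti_eq_pfold, GSAux.pderivMulti_eq_pfold]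
          exact GSAux.pfold_smul _ κ (c:ℂ) hGsm
        rw [he, norm_mul, Complex.norm_real, Real.norm_eq_abs, abs_of_pos hcpos]
      -- bound for g' with general parameters
      have hg'b : ∀ (N' B' : ℝ), 0 < N' → 0 < B' → ∀ (x : EuclideanSpace ℝ (Fin d))
          (κ : Fin d → ℕ),
          (1 + ‖x‖) ^ N' * ‖pderivMulti d κ
            (fun y => (c:ℂ) * (f₀ y * h (ξ - y))) x‖
          ≤ (c * ((gsNorm d β (N'+N₀) (B'/2) f₀).toReal *
              (gsNorm d β (-N₀) (B'/2) h).toReal * (1 + ‖ξ‖) ^ N₀))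
            * (B' ^ (∑ i, κ i) * ∏ i, ((κ i : ℝ) ^ (β * (κ i : ℝ)))) := by
        intro N' B' hN' hB' x κ
        rw [hg'der]
        have hGb := GSAux.G_bound hβ hh hf₀sm hN₀ ξ hN' hB' (hhn (B'/2) (by linarith))
          (hf₀n (N'+N₀) (B'/2) (by linarith) (by linarith)) x κ
        calc (1 + ‖x‖) ^ N' * (c * ‖pderivMulti d κ
              (fun y => f₀ y * h (ξ - y)) x‖)
            = c * ((1 + ‖x‖) ^ N' * ‖pderivMulti d κ
                (fun y => f₀ y * h (ξ - y)) x‖) := by ring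
          _ ≤ c * (((gsNorm d β (N'+N₀) (B'/2) f₀).toReal *
                (gsNorm d β (-N₀) (B'/2) h).toReal * (1 + ‖ξ‖) ^ N₀) *
              (B' ^ (∑ i, κ i) * ∏ i, ((κ i : ℝ) ^ (β * (κ i : ℝ))))) :=
              mul_le_mul_of_nonneg_left hGb hcpos.le
          _ = _ := by ring
      have hg'mem : (fun y : EuclideanSpace ℝ (Fin d) => (c:ℂ) * (f₀ y * h (ξ - y)))
          ∈ gsSpace d β :=
        ⟨hg'sm, fun N' B' hN' hB' =>
          (lt_of_le_of_lt (GSAux.gsNorm_le_of_bound hB' (hg'b N' B' hN' hB'))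
            ENNReal.ofReal_lt_top).ne⟩
      have hg'norm : gsNorm d β N B (fun y => (c:ℂ) * (f₀ y * h (ξ - y)))
          ≤ ENNReal.ofReal δ := by
        apply GSAux.gsNorm_le_of_bound hB
        intro x κ
        have hbb := hg'b N B hN hB x κ
        have hcD : c * ((gsNorm d β (N+N₀) (B/2) f₀).toReal *
            (gsNorm d β (-N₀) (B/2) h).toReal * (1 + ‖ξ‖) ^ N₀) = δ := by
          rw [hcdef]
          field_simp
        rwa [hcD] at hbb
      have hu' := hu (fun y => (c:ℂ) * (f₀ y * h (ξ - y))) hg'mem hg'norm ξ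
      have hfun : (fun t : EuclideanSpace ℝ (Fin d) =>
          (fun y : EuclideanSpace ℝ (Fin d) => (c:ℂ) * (f₀ y * h (ξ - y))) (ξ - t))
          = (c:ℂ) • (fun t => h t * f₀ (ξ - t)) := by
        funext t
        simp only [Pi.smul_apply, smul_eq_mul, sub_sub_cancel]
        ring
      rw [hfun, hu_smul (c:ℂ) _ hFmem, norm_mul, Complex.norm_real, Real.norm_eq_abs, abs_of_pos hcpos] at hu'
      -- hu' : (1+‖ξ‖)^(N₀+d+1) * (c * |u F|) ≤ 1
      have hW'pos : (0:ℝ) < (1 + ‖ξ‖) ^ (N₀ + (d:ℝ) + 1) := Real.rpow_pos_of_pos hξpos _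
      have hA0 : 0 ≤ ‖(u fun t => h t * f₀ (ξ - t))‖ := norm_nonneg _
      have hA1 : ‖(u fun t => h t * f₀ (ξ - t))‖
          ≤ δ⁻¹ * (1 + ‖ξ‖) ^ (-(d:ℝ) - 1) *
            ((gsNorm d β (-N₀) (B/2) h).toReal * (gsNorm d β (N+N₀) (B/2) f₀).toReal) := by
        have h2 : c * ‖(u fun t => h t * f₀ (ξ - t))‖
            ≤ ((1 + ‖ξ‖) ^ (N₀ + (d:ℝ) + 1))⁻¹ := by
          rw [← one_div, le_div_iff₀ hW'pos]
          calc c * ‖(u fun t => h t * f₀ (ξ - t))‖ * (1 + ‖ξ‖) ^ (N₀ + (d:ℝ) + 1)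
              = (1 + ‖ξ‖) ^ (N₀ + (d:ℝ) + 1) *
                (c * ‖(u fun t => h t * f₀ (ξ - t))‖) := by ring
            _ ≤ 1 := hu'
        have h3 : ‖(u fun t => h t * f₀ (ξ - t))‖
            ≤ c⁻¹ * ((1 + ‖ξ‖) ^ (N₀ + (d:ℝ) + 1))⁻¹ := by
          calc ‖(u fun t => h t * f₀ (ξ - t))‖
              = c⁻¹ * (c * ‖(u fun t => h t * f₀ (ξ - t))‖) := by
                field_simp
            _ ≤ c⁻¹ * ((1 + ‖ξ‖) ^ (N₀ + (d:ℝ) + 1))⁻¹ :=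
                mul_le_mul_of_nonneg_left h2 (by positivity)
        refine le_trans h3 (le_of_eq ?_)
        have hrp : ((1 + ‖ξ‖) ^ (N₀ + (d:ℝ) + 1))⁻¹ = (1 + ‖ξ‖) ^ (-(N₀ + (d:ℝ) + 1)) :=
          (Real.rpow_neg hξpos.le _).symm
        have hrp2 : (1 + ‖ξ‖) ^ (N₀:ℝ) * (1 + ‖ξ‖) ^ (-(N₀ + (d:ℝ) + 1))
            = (1 + ‖ξ‖) ^ (-(d:ℝ) - 1) := by
          rw [← Real.rpow_add hξpos]
          congr 1
          ring
        rw [hcdef, inv_div, hrp]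
        rw [div_mul_eq_mul_div, ← hrp2]
        field_simp
      calc ENNReal.ofReal (‖(u fun t => h t * f₀ (ξ - t))‖)
          ≤ ENNReal.ofReal (δ⁻¹ * (1 + ‖ξ‖) ^ (-(d:ℝ) - 1) *
              ((gsNorm d β (-N₀) (B/2) h).toReal * (gsNorm d β (N+N₀) (B/2) f₀).toReal)) :=
            ENNReal.ofReal_le_ofReal hA1
        _ = ENNReal.ofReal (δ⁻¹ * (1 + ‖ξ‖) ^ (-(d:ℝ) - 1)) *
            ENNReal.ofReal ((gsNorm d β (-N₀) (B/2) h).toReal *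
              (gsNorm d β (N+N₀) (B/2) f₀).toReal) := by
            rw [ENNReal.ofReal_mul (by positivity)]
        _ = ENNReal.ofReal (δ⁻¹ * (1 + ‖ξ‖) ^ (-(d:ℝ) - 1)) *
            (ENNReal.ofReal (gsNorm d β (-N₀) (B/2) h).toReal *
             ENNReal.ofReal (gsNorm d β (N+N₀) (B/2) f₀).toReal) := by
            rw [ENNReal.ofReal_mul hCh0]
        _ = ENNReal.ofReal (δ⁻¹ * (1 + ‖ξ‖) ^ (-(d:ℝ) - 1)) *
            (gsNorm d β (-N₀) (B/2) h * gsNorm d β (N+N₀) (B/2) f₀) := by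
            rw [ENNReal.ofReal_toReal hhfinB, ENNReal.ofReal_toReal hffinB]
  · -- integrability
    have hint : MeasureTheory.Integrable
        (fun x : EuclideanSpace ℝ (Fin d) => (1 + ‖x‖) ^ (-((d:ℝ) + 1))) :=
      integrable_one_add_norm (by rw [finrank_euclideanSpace_fin]; linarith)
    have heq : (fun ζ : EuclideanSpace ℝ (Fin d) => δ⁻¹ * (1 + ‖ζ‖) ^ (-(d:ℝ) - 1) *
          ((gsNorm d β (-N₀) (B/2) h).toReal * (gsNorm d β (N+N₀) (B/2) f₀).toReal))
        = fun ζ => (δ⁻¹ * ((gsNorm d β (-N₀) (B/2) h).toReal *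
            (gsNorm d β (N+N₀) (B/2) f₀).toReal)) * (1 + ‖ζ‖) ^ (-((d:ℝ) + 1)) := by
      funext ζ
      rw [show -(d:ℝ) - 1 = -((d:ℝ) + 1) by ring]
      ring
    rw [heq]
    exact hint.const_mul _
end
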